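/- arXiv:1603.01375 — 10 statements merged into one kernel-verified Lean document; each statement's English description precedes it below -/
import Mathlib

section
/- The limit lim_{z→0⁺} h(z) exists and is finite; equivalently, h extends to a continuous function on [0, s₀], and 0 ≤ h(z) ≤ s₀²/m(s₀) for all z ∈ (0, s₀). -/
open MeasureTheory Set Filter Topology

/-!
Concavity of `m` together with `m(0⁺) = 0` makes `m(r) / r` decreasing, so `r / m(r)` is bounded
by `s₀ / m(s₀)` on `(0, s₀]`. For `z ∈ [0, s₀]`, `h(z) = ∫_{(0, s₀]} (r - z)⁺ / m(r) dr`; this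
integrand is continuous in `z` and dominated by the constant `s₀ / m(s₀)`, so dominated
convergence extends `h` continuously to `z = 0`, and the bounds follow at once.
-/

theorem concaveOn_of_contDiffOn_of_deriv2_nonpos {U D : Set ℝ} {f : ℝ → ℝ} (hU : IsOpen U)
    (hD : Convex ℝ D) (hDU : D ⊆ U) (hf : ContDiffOn ℝ 2 f U)
    (hf'' : ∀ x ∈ U, deriv (deriv f) x ≤ 0) : ConcaveOn ℝ D f :=
  concaveOn_of_deriv2_nonpos' hD ((hf.differentiableOn (by norm_num)).mono hDU)
    (((hf.deriv_of_isOpen hU (by norm_num : (1 : WithTop ℕ∞) + 1 ≤ 2)).differentiableOn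
      one_ne_zero).mono hDU)
    fun x hx => hf'' x (hDU hx)

theorem ConcaveOn.mul_le_mul_of_tendsto_nhdsGT_zero {b r : ℝ} {f : ℝ → ℝ}
    (hf : ConcaveOn ℝ (Ioc 0 b) f) (hf0 : Tendsto f (𝓝[>] 0) (𝓝 0)) (hr : r ∈ Ioc 0 b) :
    r * f b ≤ b * f r := by
  obtain ⟨hr0, hrb⟩ := hr
  rcases hrb.eq_or_lt with rfl | hrb
  · exact le_rfl
  have hslope : (f b - f r) / (b - r) ≤ f r / r := by
    have hlim : Tendsto (fun ε => (f r - f ε) / (r - ε)) (𝓝[>] 0) (𝓝 ((f r - 0) / (r - 0))) :=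
      (tendsto_const_nhds.sub hf0).div
        (tendsto_const_nhds.sub (tendsto_id.mono_left nhdsWithin_le_nhds)) (by simpa using hr0.ne')
    refine ge_of_tendsto (by simpa using hlim) ?_
    filter_upwards [Ioo_mem_nhdsGT hr0] with ε hε
    exact hf.slope_anti_adjacent ⟨hε.1, hε.2.le.trans hrb.le⟩ ⟨hr0.trans hrb, le_rfl⟩ hε.2 hrb
  rw [div_le_div_iff₀ (sub_pos.2 hrb) hr0] at hslope
  linarith

/-- The paper's `h(z)` for `z ∈ [0, b]`, written over the fixed domain `(0, b]`. -/
noncomputable def rampIntegral (m : ℝ → ℝ) (b z : ℝ) : ℝ :=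
  ∫ r in Ioc 0 b, max (r - z) 0 / m r

theorem intervalIntegral_sub_div_eq_rampIntegral {m : ℝ → ℝ} {b z : ℝ} (hz : z ∈ Icc 0 b) :
    ∫ r in b..z, (z - r) / m r = rampIntegral m b z := by
  have hramp : EqOn (fun r => max (r - z) 0 / m r)
      ((Ioc z b).indicator fun r => (r - z) / m r) (Ioc 0 b) := by
    intro r hr
    by_cases hzr : z < r
    · simp [indicator_of_mem (show r ∈ Ioc z b from ⟨hzr, hr.2⟩), hzr.le]
    · simp [hzr, not_lt.1 hzr]
  rw [rampIntegral, setIntegral_congr_fun measurableSet_Ioc hramp,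
    setIntegral_indicator measurableSet_Ioc, Ioc_inter_Ioc, max_eq_right hz.1, min_self,
    intervalIntegral.integral_symm, intervalIntegral.integral_of_le hz.2, ← integral_neg]
  congr 1 with r
  rw [← neg_div, neg_sub]

section rampIntegral

variable {m : ℝ → ℝ} {b C : ℝ}

theorem rampIntegral_nonneg (hpos : ∀ r ∈ Ioc 0 b, 0 < m r) (z : ℝ) : 0 ≤ rampIntegral m b z :=
  setIntegral_nonneg measurableSet_Ioc fun r hr => div_nonneg (le_max_right _ _) (hpos r hr).le

theorem norm_max_sub_div_le (hpos : ∀ r ∈ Ioc 0 b, 0 < m r) (hC : ∀ r ∈ Ioc 0 b, r / m r ≤ C)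
    {z r : ℝ} (hz : 0 ≤ z) (hr : r ∈ Ioc 0 b) : ‖max (r - z) 0 / m r‖ ≤ C := by
  have hmr := hpos r hr
  rw [Real.norm_of_nonneg (div_nonneg (le_max_right _ _) hmr.le)]
  refine le_trans ?_ (hC r hr)
  gcongr
  exact max_le (by linarith) hr.1.le

theorem rampIntegral_le (hb : 0 ≤ b) (hpos : ∀ r ∈ Ioc 0 b, 0 < m r)
    (hC : ∀ r ∈ Ioc 0 b, r / m r ≤ C) {z : ℝ} (hz : 0 ≤ z) : rampIntegral m b z ≤ C * b := by
  have := norm_setIntegral_le_of_norm_le_const (measure_Ioc_lt_top (μ := volume))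
    fun r hr => norm_max_sub_div_le hpos hC hz hr
  rw [Real.volume_real_Ioc_of_le hb, sub_zero] at this
  exact (le_abs_self _).trans this

theorem continuousOn_rampIntegral (hm : ContinuousOn m (Ioc 0 b))
    (hpos : ∀ r ∈ Ioc 0 b, 0 < m r) (hC : ∀ r ∈ Ioc 0 b, r / m r ≤ C) :
    ContinuousOn (rampIntegral m b) (Ici 0) := by
  refine continuousOn_of_dominated (bound := fun _ => C) (fun z _ => ?_) (fun z hz => ?_)
    (integrableOn_const measure_Ioc_lt_top.ne) (Eventually.of_forall fun r => ?_)
  · exact ContinuousOn.aestronglyMeasurable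
      (((continuous_id.sub continuous_const).max continuous_const).continuousOn.div hm
        fun r hr => (hpos r hr).ne') measurableSet_Ioc
  · exact (ae_restrict_mem measurableSet_Ioc).mono fun r hr => norm_max_sub_div_le hpos hC hz hr
  · exact (((continuous_const.sub continuous_id).max continuous_const).div_const _).continuousOn

end rampIntegral

theorem limit_of_h_at_zero_exists_general
    (S : EReal) (m : ℝ → ℝ)
    (hm_c2 : ContDiffOn ℝ 2 m {z : ℝ | 0 < z ∧ (z : EReal) < S})
    (hm_pos : ∀ z : ℝ, 0 < z → (z : EReal) < S → 0 < m z)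
    (hm_conc : ∀ z : ℝ, 0 < z → (z : EReal) < S → deriv (deriv m) z ≤ 0)
    (hm0 : Tendsto m (𝓝[>] (0 : ℝ)) (𝓝 0))
    (s₀ : ℝ) (hs₀ : 0 < s₀) (hs₀S : (s₀ : EReal) < S) :
    (∃ L : ℝ, Tendsto (fun z => ∫ r in s₀..z, (z - r) / m r) (𝓝[>] (0 : ℝ)) (𝓝 L)) ∧
    (∃ H : ℝ → ℝ, ContinuousOn H (Icc 0 s₀) ∧
      ∀ z ∈ Ioo (0 : ℝ) s₀, H z = ∫ r in s₀..z, (z - r) / m r) ∧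
    (∀ z ∈ Ioo (0 : ℝ) s₀,
      0 ≤ (∫ r in s₀..z, (z - r) / m r) ∧
      (∫ r in s₀..z, (z - r) / m r) ≤ s₀ ^ 2 / m s₀) := by
  set U : Set ℝ := {z : ℝ | 0 < z ∧ (z : EReal) < S}
  have hU : IsOpen U := (isOpen_lt continuous_const continuous_id).inter
    (isOpen_Iio.preimage continuous_coe_real_ereal)
  have hsub : Ioc 0 s₀ ⊆ U := fun r hr => ⟨hr.1, (EReal.coe_le_coe_iff.2 hr.2).trans_lt hs₀S⟩
  have hpos : ∀ r ∈ Ioc 0 s₀, 0 < m r := fun r hr => hm_pos r (hsub hr).1 (hsub hr).2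
  have hconc : ConcaveOn ℝ (Ioc 0 s₀) m := concaveOn_of_contDiffOn_of_deriv2_nonpos hU
    (convex_Ioc 0 s₀) hsub hm_c2 fun z hz => hm_conc z hz.1 hz.2
  have hbound : ∀ r ∈ Ioc 0 s₀, r / m r ≤ s₀ / m s₀ := fun r hr =>
    (div_le_div_iff₀ (hpos r hr) (hpos s₀ ⟨hs₀, le_rfl⟩)).2
      (hconc.mul_le_mul_of_tendsto_nhdsGT_zero hm0 hr)
  have hcont := continuousOn_rampIntegral (hm_c2.continuousOn.mono hsub) hpos hbound
  have heq : ∀ z ∈ Ioo 0 s₀, ∫ r in s₀..z, (z - r) / m r = rampIntegral m s₀ z :=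
    fun z hz => intervalIntegral_sub_div_eq_rampIntegral (Ioo_subset_Icc_self hz)
  refine ⟨⟨rampIntegral m s₀ 0, ?_⟩, ⟨rampIntegral m s₀, hcont.mono Icc_subset_Ici_self,
    fun z hz => (heq z hz).symm⟩, fun z hz => ?_⟩
  · refine (((hcont 0 self_mem_Ici).mono Ioi_subset_Ici_self).tendsto).congr' ?_
    filter_upwards [Ioo_mem_nhdsGT hs₀] with z hz using (heq z hz).symm
  · rw [heq z hz]
    refine ⟨rampIntegral_nonneg hpos z, (rampIntegral_le hs₀.le hpos hbound hz.1.le).trans_eq ?_⟩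
    ring

/-- Under condition (M) for `m` on `(0,S)` with `S ∈ (0,∞]`, fixing
`s₀ ∈ (0,S)` and `h(z) := ∫_{s₀}^z (z−r)/m(r) dr`, the limit of `h` as `z → 0⁺` exists
and is finite; equivalently `h` extends continuously to `[0,s₀]`; moreover
`0 ≤ h(z) ≤ s₀²/m(s₀)` for all `z ∈ (0,s₀)`. -/
theorem limit_of_h_at_zero_exists
    (S : EReal) (hS : 0 < S) (m : ℝ → ℝ)
    (hm_c2 : ContDiffOn ℝ 2 m {z : ℝ | 0 < z ∧ (z : EReal) < S})
    (hm_pos : ∀ z : ℝ, 0 < z → (z : EReal) < S → 0 < m z)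
    (hm_conc : ∀ z : ℝ, 0 < z → (z : EReal) < S → deriv (deriv m) z ≤ 0)
    (hm0 : Tendsto m (𝓝[>] (0 : ℝ)) (𝓝 0))
    (hmS : S ≠ ⊤ → Tendsto m (𝓝[<] S.toReal) (𝓝 0))
    (s₀ : ℝ) (hs₀ : 0 < s₀) (hs₀S : (s₀ : EReal) < S) :
    (∃ L : ℝ, Tendsto (fun z => ∫ r in s₀..z, (z - r) / m r) (𝓝[>] (0 : ℝ)) (𝓝 L)) ∧
    (∃ H : ℝ → ℝ, ContinuousOn H (Icc 0 s₀) ∧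
      ∀ z ∈ Ioo (0 : ℝ) s₀, H z = ∫ r in s₀..z, (z - r) / m r) ∧
    (∀ z ∈ Ioo (0 : ℝ) s₀,
      0 ≤ (∫ r in s₀..z, (z - r) / m r) ∧
      (∫ r in s₀..z, (z - r) / m r) ≤ s₀ ^ 2 / m s₀) :=
  limit_of_h_at_zero_exists_general S m hm_c2 hm_pos hm_conc hm0 s₀ hs₀ hs₀S
end

section
/- If S < ∞, then the limit lim_{z→S⁻} h(z) exists and is finite; consequently h is bounded on (0,S) and extends to a continuous function on [0,S]. -/
open MeasureTheory Set Filter Topology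

/-!
Concavity and positivity of `m` give the linear lower bound `m r ≥ c (S - r)` on `[s₀, S)`. Hence
the integrand `(z - r) / m r ≤ (S - r) / m r` of `h` stays bounded, and `h` is bounded above on
`(s₀, S)`. Since `h' z = ∫_{s₀}^z 1/m ≥ 0` for `z ≥ s₀`, `h` is monotone there and converges at
`S`. The reflection `r ↦ S - r` preserves the hypotheses and exchanges the two endpoints, which
gives the limit at `0`. Being continuous on `(0, S)` with limits at both ends, `h` extends
continuously to `[0, S]`, and is bounded by compactness.
-/

/-- The function `h` of the statement: the second primitive of `1 / m` vanishing to first order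
at `s₀`. -/
noncomputable def secondPrimitiveInv (m : ℝ → ℝ) (s₀ z : ℝ) : ℝ := ∫ r in s₀..z, (z - r) / m r

lemma concaveOn_of_contDiffOn_two {s : Set ℝ} (hs : IsOpen s) (hconv : Convex ℝ s) {f : ℝ → ℝ}
    (hf : ContDiffOn ℝ 2 f s) (hf'' : ∀ x ∈ s, deriv (deriv f) x ≤ 0) : ConcaveOn ℝ s f :=
  concaveOn_of_deriv2_nonpos' hconv (hf.differentiableOn (by norm_num))
    ((hf.deriv_of_isOpen hs (m := 1) (by norm_num)).differentiableOn one_ne_zero) hf''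

lemma ConcaveOn.mul_sub_le_mul_sub {s : Set ℝ} {f : ℝ → ℝ} (hf : ConcaveOn ℝ s f) {a r t : ℝ}
    (ha : a ∈ s) (ht : t ∈ s) (hft : 0 ≤ f t) (har : a ≤ r) (hrt : r ≤ t) :
    f a * (t - r) ≤ f r * (t - a) := by
  rcases har.eq_or_lt with rfl | har
  · rfl
  have hta : 0 < t - a := by linarith
  have hcomb := hf.2 ha ht (div_nonneg (sub_nonneg.2 hrt) hta.le)
    (div_nonneg (sub_nonneg.2 har.le) hta.le)
    (by rw [← add_div, div_eq_one_iff_eq hta.ne']; ring)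
  have hr : ((t - r) / (t - a)) • a + ((r - a) / (t - a)) • t = r := by
    simp only [smul_eq_mul]; field_simp; ring
  rw [hr, smul_eq_mul, smul_eq_mul] at hcomb
  have hfa : (t - r) / (t - a) * f a ≤ f r := by
    nlinarith [mul_nonneg (div_nonneg (sub_nonneg.2 har.le) hta.le) hft]
  calc f a * (t - r) = (t - r) / (t - a) * f a * (t - a) := by field_simp
    _ ≤ f r * (t - a) := by gcongr

lemma ConcaveOn.comp_const_sub_Ioo {S : ℝ} {m : ℝ → ℝ} (hm : ConcaveOn ℝ (Ioo 0 S) m) :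
    ConcaveOn ℝ (Ioo 0 S) (fun u => m (S - u)) := by
  refine ⟨convex_Ioo 0 S, fun x hx y hy a b ha hb hab => ?_⟩
  convert hm.2 (x := S - x) ⟨by linarith [hx.2], by linarith [hx.1]⟩
    (y := S - y) ⟨by linarith [hy.2], by linarith [hy.1]⟩ ha hb hab using 2
  simp only [smul_eq_mul]
  linear_combination (-S) * hab

lemma secondPrimitiveInv_eq_reflect (m : ℝ → ℝ) (S s₀ z : ℝ) :
    secondPrimitiveInv m s₀ z = secondPrimitiveInv (fun u => m (S - u)) (S - s₀) (S - z) := by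
  have h := intervalIntegral.integral_comp_sub_left (fun r => (r - z) / m r)
    (a := S - s₀) (b := S - z) S
  simp only [sub_sub_cancel] at h
  rw [secondPrimitiveInv, secondPrimitiveInv, intervalIntegral.integral_symm,
    ← intervalIntegral.integral_neg]
  simp only [← neg_div, neg_sub]
  rw [← h]
  congr 1; ext u; ring

lemma tendsto_const_sub_nhdsGT_zero (S : ℝ) : Tendsto (fun z => S - z) (𝓝[>] 0) (𝓝[<] S) := by
  refine tendsto_nhdsWithin_of_tendsto_nhds_of_eventually_within _ ?_ ?_
  · simpa using ((continuous_sub_left S).tendsto' (0:ℝ) S (by simp)).mono_left nhdsWithin_le_nhds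
  · filter_upwards [self_mem_nhdsWithin] with z hz
    simpa using hz

variable {S : ℝ} {m : ℝ → ℝ}

lemma sub_div_le_of_concaveOn_Ioo (hconc : ConcaveOn ℝ (Ioo 0 S) m)
    (hpos : ∀ z ∈ Ioo 0 S, 0 < m z) {s₀ r : ℝ} (hs₀ : s₀ ∈ Ioo 0 S) (hr : r ∈ Ico s₀ S) :
    (S - r) / m r ≤ 2 * (S - s₀) / m s₀ := by
  have hr' : r ∈ Ioo 0 S := ⟨hs₀.1.trans_le hr.1, hr.2⟩
  have ht : (r + S) / 2 ∈ Ioo 0 S := ⟨by linarith [hr'.1, hr.2], by linarith [hr.2]⟩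
  have hchord := hconc.mul_sub_le_mul_sub hs₀ ht (hpos _ ht).le hr.1 (by linarith [hr.2])
  rw [div_le_div_iff₀ (hpos r hr') (hpos s₀ hs₀)]
  nlinarith [hpos r hr', hr.2]

lemma ContinuousOn.intervalIntegrable_of_mem_Ioo {a b x y : ℝ} {g : ℝ → ℝ}
    (hg : ContinuousOn g (Ioo a b)) (hx : x ∈ Ioo a b) (hy : y ∈ Ioo a b) :
    IntervalIntegrable g volume x y :=
  (hg.mono (ordConnected_Ioo.uIcc_subset hx hy)).intervalIntegrable

lemma hasDerivAt_integral_of_continuousOn_Ioo {a b x y : ℝ} {g : ℝ → ℝ}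
    (hg : ContinuousOn g (Ioo a b)) (hx : x ∈ Ioo a b) (hy : y ∈ Ioo a b) :
    HasDerivAt (fun u => ∫ r in x..u, g r) (g y) y :=
  intervalIntegral.integral_hasDerivAt_right (hg.intervalIntegrable_of_mem_Ioo hx hy)
    (hg.stronglyMeasurableAtFilter isOpen_Ioo y hy) (hg.continuousAt (isOpen_Ioo.mem_nhds hy))

lemma hasDerivAt_secondPrimitiveInv (hm : ContinuousOn m (Ioo 0 S))
    (hm_ne : ∀ z ∈ Ioo 0 S, m z ≠ 0) {s₀ z : ℝ} (hs₀ : s₀ ∈ Ioo 0 S) (hz : z ∈ Ioo 0 S) :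
    HasDerivAt (secondPrimitiveInv m s₀) (∫ r in s₀..z, (m r)⁻¹) z := by
  have hinv : ContinuousOn (fun r => (m r)⁻¹) (Ioo 0 S) := hm.inv₀ hm_ne
  have hid : ContinuousOn (fun r => r * (m r)⁻¹) (Ioo 0 S) := continuousOn_id.mul hinv
  have hsplit : (fun u => u * (∫ r in s₀..u, (m r)⁻¹) - ∫ r in s₀..u, r * (m r)⁻¹)
      =ᶠ[𝓝 z] secondPrimitiveInv m s₀ := by
    filter_upwards [isOpen_Ioo.mem_nhds hz] with u hu
    rw [secondPrimitiveInv, ← intervalIntegral.integral_const_mul, ← intervalIntegral.integral_sub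
      ((hinv.intervalIntegrable_of_mem_Ioo hs₀ hu).const_mul u)
      (hid.intervalIntegrable_of_mem_Ioo hs₀ hu)]
    congr 1; ext r; ring
  have h := ((hasDerivAt_id' z).mul (hasDerivAt_integral_of_continuousOn_Ioo hinv hs₀ hz)).sub
    (hasDerivAt_integral_of_continuousOn_Ioo hid hs₀ hz)
  rw [one_mul, add_sub_cancel_right] at h
  exact h.congr_of_eventuallyEq hsplit.symm

lemma monotoneOn_secondPrimitiveInv (hm : ContinuousOn m (Ioo 0 S))
    (hpos : ∀ z ∈ Ioo 0 S, 0 < m z) {s₀ : ℝ} (hs₀ : s₀ ∈ Ioo 0 S) :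
    MonotoneOn (secondPrimitiveInv m s₀) (Ioo s₀ S) := by
  have hderiv : ∀ z ∈ Ioo s₀ S, HasDerivAt (secondPrimitiveInv m s₀) (∫ r in s₀..z, (m r)⁻¹) z :=
    fun z hz => hasDerivAt_secondPrimitiveInv hm (fun x hx => (hpos x hx).ne') hs₀
      ⟨hs₀.1.trans hz.1, hz.2⟩
  refine monotoneOn_of_hasDerivWithinAt_nonneg (f' := fun z => ∫ r in s₀..z, (m r)⁻¹)
    (convex_Ioo s₀ S) (fun z hz => (hderiv z hz).continuousAt.continuousWithinAt)
    (fun z hz => ?_) (fun z hz => ?_)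
  · rw [interior_Ioo] at hz ⊢
    exact (hderiv z hz).hasDerivWithinAt
  · rw [interior_Ioo] at hz
    exact intervalIntegral.integral_nonneg hz.1.le fun r hr =>
      inv_nonneg.2 (hpos r ⟨hs₀.1.trans_le hr.1, hr.2.trans_lt hz.2⟩).le

lemma bddAbove_secondPrimitiveInv (hconc : ConcaveOn ℝ (Ioo 0 S) m)
    (hpos : ∀ z ∈ Ioo 0 S, 0 < m z) {s₀ : ℝ} (hs₀ : s₀ ∈ Ioo 0 S) :
    BddAbove (secondPrimitiveInv m s₀ '' Ioo s₀ S) := by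
  set K := 2 * (S - s₀) / m s₀
  refine ⟨K * (S - s₀), ?_⟩
  rintro _ ⟨z, hz, rfl⟩
  have hz' : z ∈ Ioo 0 S := ⟨hs₀.1.trans hz.1, hz.2⟩
  have hint : IntervalIntegrable (fun r => (z - r) / m r) volume s₀ z :=
    ((continuousOn_const.sub continuousOn_id).div (hconc.continuousOn isOpen_Ioo)
      (fun x hx => (hpos x hx).ne')).intervalIntegrable_of_mem_Ioo hs₀ hz'
  have hle := intervalIntegral.integral_mono_on hz.1.le hint (intervalIntegrable_const (c := K))
    fun r hr => ?_
  · rw [intervalIntegral.integral_const, smul_eq_mul] at hle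
    have hK : 0 ≤ K := by have := hpos s₀ hs₀; have := hs₀.2; positivity
    calc secondPrimitiveInv m s₀ z ≤ (z - s₀) * K := hle
      _ ≤ K * (S - s₀) := by nlinarith [hz.2]
  · have hr' : r ∈ Ico s₀ S := ⟨hr.1, hr.2.trans_lt hz.2⟩
    calc (z - r) / m r ≤ (S - r) / m r := by
          gcongr
          · exact (hpos r ⟨hs₀.1.trans_le hr'.1, hr'.2⟩).le
          · exact hz.2.le
      _ ≤ K := sub_div_le_of_concaveOn_Ioo hconc hpos hs₀ hr'

lemma ConcaveOn.tendsto_secondPrimitiveInv_nhdsLT (hconc : ConcaveOn ℝ (Ioo 0 S) m)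
    (hpos : ∀ z ∈ Ioo 0 S, 0 < m z) {s₀ : ℝ} (hs₀ : s₀ ∈ Ioo 0 S) :
    ∃ L, Tendsto (secondPrimitiveInv m s₀) (𝓝[<] S) (𝓝 L) :=
  have hmono := monotoneOn_secondPrimitiveInv (hconc.continuousOn isOpen_Ioo) hpos hs₀
  ⟨_, hmono.tendsto_nhdsWithin_Ioo_left (nonempty_Ioo.2 hs₀.2)
    (bddAbove_secondPrimitiveInv hconc hpos hs₀)⟩

lemma ConcaveOn.tendsto_secondPrimitiveInv_nhdsGT (hconc : ConcaveOn ℝ (Ioo 0 S) m)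
    (hpos : ∀ z ∈ Ioo 0 S, 0 < m z) {s₀ : ℝ} (hs₀ : s₀ ∈ Ioo 0 S) :
    ∃ L, Tendsto (secondPrimitiveInv m s₀) (𝓝[>] 0) (𝓝 L) := by
  obtain ⟨L, hL⟩ := hconc.comp_const_sub_Ioo.tendsto_secondPrimitiveInv_nhdsLT
    (fun u hu => hpos _ ⟨by linarith [hu.2], by linarith [hu.1]⟩)
    (s₀ := S - s₀) ⟨by linarith [hs₀.2], by linarith [hs₀.1]⟩
  refine ⟨L, ?_⟩
  rw [funext (secondPrimitiveInv_eq_reflect m S s₀)]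
  exact hL.comp (tendsto_const_sub_nhdsGT_zero S)

theorem limit_of_h_at_S_exists_general
    (S : ℝ) (m : ℝ → ℝ)
    (hm_c2 : ContDiffOn ℝ 2 m (Ioo 0 S))
    (hm_pos : ∀ z ∈ Ioo (0 : ℝ) S, 0 < m z)
    (hm_conc : ∀ z ∈ Ioo (0 : ℝ) S, deriv (deriv m) z ≤ 0)
    (s₀ : ℝ) (hs₀ : s₀ ∈ Ioo (0 : ℝ) S) :
    (∃ L : ℝ, Tendsto (fun z => ∫ r in s₀..z, (z - r) / m r) (𝓝[<] S) (𝓝 L)) ∧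
    (∃ C : ℝ, ∀ z ∈ Ioo (0 : ℝ) S, |∫ r in s₀..z, (z - r) / m r| ≤ C) ∧
    (∃ H : ℝ → ℝ, ContinuousOn H (Icc 0 S) ∧
      ∀ z ∈ Ioo (0 : ℝ) S, H z = ∫ r in s₀..z, (z - r) / m r) := by
  have hconc : ConcaveOn ℝ (Ioo 0 S) m :=
    concaveOn_of_contDiffOn_two isOpen_Ioo (convex_Ioo 0 S) hm_c2 hm_conc
  have hcont : ContinuousOn (secondPrimitiveInv m s₀) (Ioo 0 S) := fun z hz =>
    (hasDerivAt_secondPrimitiveInv hm_c2.continuousOn (fun x hx => (hm_pos x hx).ne') hs₀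
      hz).continuousAt.continuousWithinAt
  obtain ⟨L, hL⟩ := hconc.tendsto_secondPrimitiveInv_nhdsLT hm_pos hs₀
  obtain ⟨L₀, hL₀⟩ := hconc.tendsto_secondPrimitiveInv_nhdsGT hm_pos hs₀
  have hH := continuousOn_Icc_extendFrom_Ioo hcont hL₀ hL
  obtain ⟨C, hC⟩ := isCompact_Icc.exists_bound_of_continuousOn hH
  refine ⟨⟨L, hL⟩, ⟨C, fun z hz => ?_⟩, ⟨_, hH, extendFrom_extends hcont⟩⟩
  have hCz := hC z (Ioo_subset_Icc_self hz)
  rwa [extendFrom_extends hcont z hz, Real.norm_eq_abs] at hCz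

/-- For `S < ∞` and `m` satisfying (M) on `(0,S)`, with
`h(z) := ∫_{s₀}^z (z−r)/m(r) dr`, the limit of `h` as `z → S⁻` exists and is finite;
consequently `h` is bounded on `(0,S)` and extends to a continuous function on `[0,S]`. -/
theorem limit_of_h_at_S_exists
    (S : ℝ) (hS : 0 < S) (m : ℝ → ℝ)
    (hm_c2 : ContDiffOn ℝ 2 m (Ioo 0 S))
    (hm_pos : ∀ z ∈ Ioo (0 : ℝ) S, 0 < m z)
    (hm_conc : ∀ z ∈ Ioo (0 : ℝ) S, deriv (deriv m) z ≤ 0)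
    (hm0 : Tendsto m (𝓝[>] (0 : ℝ)) (𝓝 0))
    (hmS : Tendsto m (𝓝[<] S) (𝓝 0))
    (s₀ : ℝ) (hs₀ : s₀ ∈ Ioo (0 : ℝ) S) :
    (∃ L : ℝ, Tendsto (fun z => ∫ r in s₀..z, (z - r) / m r) (𝓝[<] S) (𝓝 L)) ∧
    (∃ C : ℝ, ∀ z ∈ Ioo (0 : ℝ) S, |∫ r in s₀..z, (z - r) / m r| ≤ C) ∧
    (∃ H : ℝ → ℝ, ContinuousOn H (Icc 0 S) ∧
      ∀ z ∈ Ioo (0 : ℝ) S, H z = ∫ r in s₀..z, (z - r) / m r) :=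
  limit_of_h_at_S_exists_general S m hm_c2 hm_pos hm_conc s₀ hs₀
end

section
/- If S < ∞, then there exists a constant C > 0 such that h(z) ≤ C (f(z)² + 1) for all z ∈ (0,S). -/
open MeasureTheory Set Filter Topology

/-! `h` is in fact bounded. A nonnegative concave `m` on `(0, S)` lies above its chord from
`s₀` to a point beyond `z` (the midpoint of `z` and `S`, or of `0` and `z`), where `m ≥ 0`;
so for `r` between `s₀` and `z`, `m r` dominates a multiple of `|z - r|`, namely
`|z - r| * m s₀ ≤ 2 S * m r`. The integrand of `h` is therefore at most `2 S / m s₀`, and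
`h z ≤ 2 S² / m s₀`. -/

theorem ContDiffOn.concaveOn_of_deriv2_nonpos {D : Set ℝ} (hD : Convex ℝ D) (hDo : IsOpen D)
    {f : ℝ → ℝ} (hf : ContDiffOn ℝ 2 f D) (hf'' : ∀ x ∈ D, deriv (deriv f) x ≤ 0) :
    ConcaveOn ℝ D f :=
  concaveOn_of_deriv2_nonpos' hD (hf.differentiableOn (by norm_num))
    ((hf.deriv_of_isOpen (m := 1) hDo (by norm_num)).differentiableOn (by norm_num)) hf''

theorem ConcaveOn.sub_mul_add_sub_mul_le {s : Set ℝ} {m : ℝ → ℝ} (hm : ConcaveOn ℝ s m)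
    {a x y : ℝ} (ha : a ∈ s) (hy : y ∈ s) (hax : a ≤ x) (hxy : x ≤ y) :
    (y - x) * m a + (x - a) * m y ≤ (y - a) * m x := by
  rcases hax.eq_or_lt with rfl | hax
  · simp
  have hya : 0 < y - a := by linarith
  have hcomb := hm.2 ha hy (div_nonneg (sub_nonneg.2 hxy) hya.le : 0 ≤ (y - x) / (y - a))
    (div_nonneg (sub_nonneg.2 hax.le) hya.le) (by field_simp; ring)
  have hx : ((y - x) / (y - a)) • a + ((x - a) / (y - a)) • y = x := by
    simp only [smul_eq_mul]; field_simp; ring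
  rw [hx, smul_eq_mul, smul_eq_mul, div_mul_eq_mul_div, div_mul_eq_mul_div, ← add_div,
    div_le_iff₀ hya] at hcomb
  linarith

theorem abs_sub_mul_le_of_mem_uIcc {S : ℝ} {m : ℝ → ℝ} (hm : ConcaveOn ℝ (Ioo 0 S) m)
    (hm_nonneg : ∀ z ∈ Ioo 0 S, 0 ≤ m z) {s₀ r z : ℝ} (hs₀ : s₀ ∈ Ioo 0 S)
    (hz : z ∈ Ioo 0 S) (hr : r ∈ uIcc s₀ z) :
    |z - r| * m s₀ ≤ 2 * S * m r := by
  have hmr := hm_nonneg r (ordConnected_Ioo.uIcc_subset hs₀ hz hr)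
  have hms₀ := hm_nonneg s₀ hs₀
  obtain ⟨hz0, hzS⟩ := hz
  have ⟨hs₀0, hs₀S⟩ := hs₀
  rcases le_total s₀ z with hs₀z | hzs₀
  · obtain ⟨hs₀r, hrz⟩ := uIcc_of_le hs₀z ▸ hr
    have hb : (z + S) / 2 ∈ Ioo 0 S := ⟨by linarith, by linarith⟩
    have hchord := hm.sub_mul_add_sub_mul_le hs₀ hb hs₀r (by linarith)
    rw [abs_of_nonneg (by linarith)]
    nlinarith [mul_nonneg (sub_nonneg.2 hzS.le) hms₀,
      mul_nonneg (sub_nonneg.2 hs₀r) (hm_nonneg _ hb), mul_nonneg hs₀0.le hmr]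
  · obtain ⟨hzr, hrs₀⟩ := uIcc_of_ge hzs₀ ▸ hr
    have ha : z / 2 ∈ Ioo 0 S := ⟨by linarith, by linarith⟩
    have hchord := hm.sub_mul_add_sub_mul_le ha hs₀ (by linarith) hrs₀
    rw [abs_of_nonpos (by linarith)]
    nlinarith [mul_nonneg (hz0.le.trans hzr) hms₀,
      mul_nonneg (sub_nonneg.2 hrs₀) (hm_nonneg _ ha),
      mul_nonneg (sub_nonneg.2 hs₀S.le) hmr, mul_nonneg hz0.le hmr]

theorem intervalIntegral_sub_div_le {S : ℝ} {m : ℝ → ℝ} (hm : ConcaveOn ℝ (Ioo 0 S) m)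
    (hm_pos : ∀ z ∈ Ioo 0 S, 0 < m z) {s₀ z : ℝ} (hs₀ : s₀ ∈ Ioo 0 S)
    (hz : z ∈ Ioo 0 S) :
    ∫ r in s₀..z, (z - r) / m r ≤ 2 * S ^ 2 / m s₀ := by
  have hms₀ := hm_pos s₀ hs₀
  have hbound : ∀ r ∈ uIoc s₀ z, ‖(z - r) / m r‖ ≤ 2 * S / m s₀ := by
    intro r hr
    have hr' := uIoc_subset_uIcc hr
    have hmr := hm_pos r (ordConnected_Ioo.uIcc_subset hs₀ hz hr')
    rw [norm_div, Real.norm_eq_abs, Real.norm_of_nonneg hmr.le, div_le_div_iff₀ hmr hms₀]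
    exact abs_sub_mul_le_of_mem_uIcc hm (fun z hz ↦ (hm_pos z hz).le) hs₀ hz hr'
  have hdist : |z - s₀| ≤ S :=
    abs_sub_le_iff.2 ⟨by linarith [hz.2, hs₀.1], by linarith [hz.1, hs₀.2]⟩
  have hS : 0 < S := hs₀.1.trans hs₀.2
  calc ∫ r in s₀..z, (z - r) / m r ≤ 2 * S / m s₀ * |z - s₀| :=
        (le_abs_self _).trans (intervalIntegral.norm_integral_le_of_norm_le_const hbound)
    _ ≤ 2 * S / m s₀ * S := by gcongr
    _ = 2 * S ^ 2 / m s₀ := by ring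

theorem h_le_C_fsq_plus_one_general
    (S : ℝ) (m : ℝ → ℝ)
    (hm_c2 : ContDiffOn ℝ 2 m (Ioo 0 S))
    (hm_pos : ∀ z ∈ Ioo (0 : ℝ) S, 0 < m z)
    (hm_conc : ∀ z ∈ Ioo (0 : ℝ) S, deriv (deriv m) z ≤ 0)
    (s₀ : ℝ) (hs₀ : s₀ ∈ Ioo (0 : ℝ) S) :
    ∃ C : ℝ, 0 < C ∧ ∀ z ∈ Ioo (0 : ℝ) S,
      (∫ r in s₀..z, (z - r) / m r) ≤
        C * ((∫ r in Ioo (0 : ℝ) z, Real.sqrt (2 / m r)) ^ 2 + 1) := by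
  have hm := ContDiffOn.concaveOn_of_deriv2_nonpos (convex_Ioo 0 S) isOpen_Ioo hm_c2 hm_conc
  have hB : 0 ≤ 2 * S ^ 2 / m s₀ := div_nonneg (by positivity) (hm_pos s₀ hs₀).le
  refine ⟨2 * S ^ 2 / m s₀ + 1, by positivity, fun z hz ↦ ?_⟩
  calc ∫ r in s₀..z, (z - r) / m r ≤ 2 * S ^ 2 / m s₀ :=
        intervalIntegral_sub_div_le hm hm_pos hs₀ hz
    _ ≤ 2 * S ^ 2 / m s₀ + 1 := le_add_of_nonneg_right zero_le_one
    _ ≤ _ := le_mul_of_one_le_right (by positivity) (le_add_of_nonneg_left (sq_nonneg _))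

/-- For `S < ∞` and `m` satisfying (M) on `(0,S)`, with
`f(z) := ∫₀^z √(2/m(r)) dr` and `h(z) := ∫_{s₀}^z (z−r)/m(r) dr`, there exists `C > 0`
such that `h(z) ≤ C (f(z)² + 1)` for all `z ∈ (0,S)`. -/
theorem h_le_C_fsq_plus_one
    (S : ℝ) (hS : 0 < S) (m : ℝ → ℝ)
    (hm_c2 : ContDiffOn ℝ 2 m (Ioo 0 S))
    (hm_pos : ∀ z ∈ Ioo (0 : ℝ) S, 0 < m z)
    (hm_conc : ∀ z ∈ Ioo (0 : ℝ) S, deriv (deriv m) z ≤ 0)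
    (hm0 : Tendsto m (𝓝[>] (0 : ℝ)) (𝓝 0))
    (hmS : Tendsto m (𝓝[<] S) (𝓝 0))
    (s₀ : ℝ) (hs₀ : s₀ ∈ Ioo (0 : ℝ) S) :
    ∃ C : ℝ, 0 < C ∧ ∀ z ∈ Ioo (0 : ℝ) S,
      (∫ r in s₀..z, (z - r) / m r) ≤
        C * ((∫ r in Ioo (0 : ℝ) z, Real.sqrt (2 / m r)) ^ 2 + 1) :=
  h_le_C_fsq_plus_one_general S m hm_c2 hm_pos hm_conc s₀ hs₀
end

section
/- For every z ∈ (0,S), the improper integral f(z) = ∫₀^z √(2/m(r)) dr is finite; if S < ∞, then also f(S) := ∫₀^S √(2/m(r)) dr is finite; and f is continuous and strictly increasing on its domain. -/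
/-!
The second-derivative condition makes `m` concave, and a concave function that is positive on
`(a, b)` lies above each of its chords. Letting the left end of the chord from `ε` to an interior
point `c` tend to `a` gives `m x ≥ m c * (x - a) / (c - a)`, and symmetrically at `b`. So near
either endpoint `√(2 / m)` is dominated by a multiple of `1 / √(distance to the endpoint)`, which
is integrable. The primitive of a function integrable on every `(0, v)` is continuous, and strictly
increasing because the integrand is positive.
-/

open MeasureTheory Set Filter Topology

theorem concaveOn_of_contDiffOn_deriv2_nonpos {D : Set ℝ} {f : ℝ → ℝ} (hD : Convex ℝ D)
    (hDo : IsOpen D) (hf : ContDiffOn ℝ 2 f D) (hf'' : ∀ x ∈ D, deriv (deriv f) x ≤ 0) :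
    ConcaveOn ℝ D f :=
  concaveOn_of_deriv2_nonpos' hD (hf.differentiableOn (by norm_num))
    ((hf.deriv_of_isOpen hDo (m := 1) (by norm_num)).differentiableOn one_ne_zero) hf''

section ConcaveEndpoint

variable {f : ℝ → ℝ} {a b c x : ℝ}

theorem ConcaveOn.sub_left_mul_le (hf : ConcaveOn ℝ (Ioo a b) f)
    (hf0 : ∀ y ∈ Ioo a b, 0 ≤ f y) (hax : a < x) (hxc : x < c) (hcb : c < b) :
    (x - a) * f c ≤ (c - a) * f x := by
  have hbound : ∀ ε ∈ Ioo a x, (x - ε) * f c ≤ (c - a) * f x := fun ε hε => by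
    have hε' : ε ∈ Ioo a b := ⟨hε.1, hε.2.trans (hxc.trans hcb)⟩
    have hsec := hf.neg.secant_mono_aux1 hε' ⟨hax.trans hxc, hcb⟩ hε.2 hxc
    simp only [Pi.neg_apply] at hsec
    linarith [mul_nonneg (sub_nonneg.2 hxc.le) (hf0 ε hε'),
      mul_nonneg (sub_nonneg.2 hε.1.le) (hf0 x ⟨hax, hxc.trans hcb⟩)]
  have hlim : Tendsto (fun ε => (x - ε) * f c) (𝓝[>] a) (𝓝 ((x - a) * f c)) :=
    ((continuous_const.sub continuous_id).mul continuous_const).continuousWithinAt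
  exact le_of_tendsto hlim (mem_of_superset (Ioo_mem_nhdsGT hax) hbound)

theorem ConcaveOn.sub_right_mul_le (hf : ConcaveOn ℝ (Ioo a b) f)
    (hf0 : ∀ y ∈ Ioo a b, 0 ≤ f y) (hac : a < c) (hcx : c < x) (hxb : x < b) :
    (b - x) * f c ≤ (b - c) * f x := by
  have hbound : ∀ ε ∈ Ioo x b, (ε - x) * f c ≤ (b - c) * f x := fun ε hε => by
    have hε' : ε ∈ Ioo a b := ⟨(hac.trans hcx).trans hε.1, hε.2⟩
    have hsec := hf.neg.secant_mono_aux1 ⟨hac, hcx.trans hxb⟩ hε' hcx hε.1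
    simp only [Pi.neg_apply] at hsec
    linarith [mul_nonneg (sub_nonneg.2 hcx.le) (hf0 ε hε'),
      mul_nonneg (sub_nonneg.2 hε.2.le) (hf0 x ⟨hac.trans hcx, hxb⟩)]
  have hlim : Tendsto (fun ε => (ε - x) * f c) (𝓝[<] b) (𝓝 ((b - x) * f c)) :=
    ((continuous_id.sub continuous_const).mul continuous_const).continuousWithinAt
  exact le_of_tendsto hlim (mem_of_superset (Ioo_mem_nhdsLT hxb) hbound)

end ConcaveEndpoint

theorem integrableOn_Ioo_inv_sqrt_sub_left (a b : ℝ) :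
    IntegrableOn (fun x => (√(x - a))⁻¹) (Ioo a b) := by
  have h := (intervalIntegral.intervalIntegrable_rpow' (r := -(1 / 2)) (by norm_num)
    (a := 0) (b := b - a)).comp_sub_right a
  simp only [zero_add, sub_add_cancel] at h
  refine (h.1.mono_set Ioo_subset_Ioc_self).congr_fun (fun x hx => ?_) measurableSet_Ioo
  rw [Real.sqrt_eq_rpow, ← Real.rpow_neg (sub_pos.2 hx.1).le]

theorem integrableOn_Ioo_inv_sqrt_sub_right (a b : ℝ) :
    IntegrableOn (fun x => (√(b - x))⁻¹) (Ioo a b) := by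
  have h := ((intervalIntegral.intervalIntegrable_rpow' (r := -(1 / 2)) (by norm_num)
    (a := 0) (b := b - a)).comp_sub_left b).symm
  simp only [sub_zero, sub_sub_cancel] at h
  refine (h.1.mono_set Ioo_subset_Ioc_self).congr_fun (fun x hx => ?_) measurableSet_Ioo
  rw [Real.sqrt_eq_rpow, ← Real.rpow_neg (sub_pos.2 hx.2).le]

theorem MeasureTheory.IntegrableOn.inv_sqrt_of_mul_le {f g : ℝ → ℝ} {s : Set ℝ} {k : ℝ}
    (hs : MeasurableSet s) (hk : 0 < k) (hf : ContinuousOn f s)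
    (hg : IntegrableOn (fun x => (√(g x))⁻¹) s) (hg_pos : ∀ x ∈ s, 0 < g x)
    (hgf : ∀ x ∈ s, k * g x ≤ f x) :
    IntegrableOn (fun x => (√(f x))⁻¹) s := by
  have hmeas : AEStronglyMeasurable (fun x => (√(f x))⁻¹) (volume.restrict s) :=
    (Real.continuous_sqrt.measurable.inv.comp_aemeasurable
      (hf.aemeasurable hs)).aestronglyMeasurable
  refine (hg.const_mul (√k)⁻¹).mono' hmeas ((ae_restrict_iff' hs).2 (ae_of_all _ fun x hx => ?_))
  have hkg : 0 < k * g x := mul_pos hk (hg_pos x hx)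
  rw [Real.norm_of_nonneg (inv_nonneg.2 (Real.sqrt_nonneg _)), ← mul_inv, ← Real.sqrt_mul hk.le]
  exact inv_anti₀ (Real.sqrt_pos.2 hkg) (Real.sqrt_le_sqrt (hgf x hx))

theorem ConcaveOn.integrableOn_inv_sqrt {f : ℝ → ℝ} {a b : ℝ} (hf : ConcaveOn ℝ (Ioo a b) f)
    (hf_pos : ∀ x ∈ Ioo a b, 0 < f x) :
    IntegrableOn (fun x => (√(f x))⁻¹) (Ioo a b) := by
  rcases le_or_gt b a with hba | hab
  · simp [Ioo_eq_empty_of_le hba]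
  obtain ⟨c, hac, hcb⟩ := exists_between hab
  have hfc : 0 < f c := hf_pos c ⟨hac, hcb⟩
  have hcont : ContinuousOn f (Ioo a b) := hf.continuousOn isOpen_Ioo
  have hf0 : ∀ x ∈ Ioo a b, 0 ≤ f x := fun x hx => (hf_pos x hx).le
  have hleft : IntegrableOn (fun x => (√(f x))⁻¹) (Ioo a c) :=
    (integrableOn_Ioo_inv_sqrt_sub_left a c).inv_sqrt_of_mul_le measurableSet_Ioo
      (div_pos hfc (sub_pos.2 hac)) (hcont.mono (Ioo_subset_Ioo_right hcb.le))
      (fun x hx => sub_pos.2 hx.1) fun x hx => by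
        rw [div_mul_eq_mul_div, div_le_iff₀ (sub_pos.2 hac), mul_comm (f c), mul_comm (f x)]
        exact hf.sub_left_mul_le hf0 hx.1 hx.2 hcb
  have hright : IntegrableOn (fun x => (√(f x))⁻¹) (Ioo c b) :=
    (integrableOn_Ioo_inv_sqrt_sub_right c b).inv_sqrt_of_mul_le measurableSet_Ioo
      (div_pos hfc (sub_pos.2 hcb)) (hcont.mono (Ioo_subset_Ioo_left hac.le))
      (fun x hx => sub_pos.2 hx.2) fun x hx => by
        rw [div_mul_eq_mul_div, div_le_iff₀ (sub_pos.2 hcb), mul_comm (f c), mul_comm (f x)]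
        exact hf.sub_right_mul_le hf0 hac hx.1 hx.2
  rw [← Ioc_union_Ioo_eq_Ioo hac.le hcb]
  exact ((integrableOn_Ioc_iff_integrableOn_Ioo).2 hleft).union hright

section Primitive

variable {g : ℝ → ℝ} {a : ℝ}

theorem continuousOn_integral_Ioo {D : Set ℝ} (hD : D ⊆ Ici a)
    (hg : ∀ v ∈ D, IntegrableOn g (Ioo a v)) :
    ContinuousOn (fun z => ∫ t in Ioo a z, g t) D := by
  have hF : ∀ v ∈ D, ContinuousOn (fun z => ∫ t in Ioo a z, g t) (Icc a v) := fun v hv => by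
    simpa only [integral_Ioc_eq_integral_Ioo] using
      intervalIntegral.continuousOn_primitive ((integrableOn_Icc_iff_integrableOn_Ioo).2 (hg v hv))
  intro z hz
  by_cases h : ∃ v ∈ D, z < v
  · obtain ⟨v, hv, hzv⟩ := h
    refine ((hF v hv).continuousWithinAt ⟨hD hz, hzv.le⟩).mono_of_mem_nhdsWithin ?_
    exact mem_nhdsWithin.2 ⟨Iio v, isOpen_Iio, hzv, fun x hx => ⟨hD hx.2, le_of_lt hx.1⟩⟩
  · push Not at h
    exact (hF z hz).mono (fun x hx => ⟨hD hx, h x hx⟩) z hz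

theorem integral_Ioo_lt_integral_Ioo {u v : ℝ} (hau : a ≤ u) (huv : u < v)
    (hg : IntegrableOn g (Ioo a v)) (hg_pos : ∀ x ∈ Ioo u v, 0 < g x) :
    ∫ t in Ioo a u, g t < ∫ t in Ioo a v, g t := by
  have hIuv : IntegrableOn g (Ioo u v) := hg.mono_set (Ioo_subset_Ioo_left hau)
  have hpos : 0 < ∫ t in Ioo u v, g t := by
    have := intervalIntegral.intervalIntegral_pos_of_pos_on
      ((intervalIntegrable_iff_integrableOn_Ioo_of_le huv.le).2 hIuv) hg_pos huv
    rwa [intervalIntegral.integral_of_le huv.le, integral_Ioc_eq_integral_Ioo] at this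
  have hIau : IntegrableOn g (Ioc a u) := hg.mono_set (Ioc_subset_Ioo_right huv)
  rw [← Ioc_union_Ioo_eq_Ioo hau huv, setIntegral_union
    (Ioc_disjoint_Ioi_same.mono_right Ioo_subset_Ioi_self) measurableSet_Ioo hIau hIuv,
    integral_Ioc_eq_integral_Ioo]
  linarith

end Primitive

theorem f_finite_continuous_strictMono_general
    (S : EReal) (hS : 0 < S) (m : ℝ → ℝ)
    (hm_c2 : ContDiffOn ℝ 2 m {z : ℝ | 0 < z ∧ (z : EReal) < S})
    (hm_pos : ∀ z : ℝ, 0 < z → (z : EReal) < S → 0 < m z)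
    (hm_conc : ∀ z : ℝ, 0 < z → (z : EReal) < S → deriv (deriv m) z ≤ 0) :
    (∀ z : ℝ, 0 < z → (z : EReal) < S →
      IntegrableOn (fun r => Real.sqrt (2 / m r)) (Ioo 0 z)) ∧
    (S ≠ ⊤ → IntegrableOn (fun r => Real.sqrt (2 / m r)) (Ioo 0 S.toReal)) ∧
    ContinuousOn (fun z => ∫ r in Ioo (0 : ℝ) z, Real.sqrt (2 / m r))
      {z : ℝ | 0 ≤ z ∧ (z : EReal) ≤ S} ∧
    StrictMonoOn (fun z => ∫ r in Ioo (0 : ℝ) z, Real.sqrt (2 / m r))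
      {z : ℝ | 0 ≤ z ∧ (z : EReal) ≤ S} := by
  set U := {z : ℝ | 0 < z ∧ (z : EReal) < S}
  have hU_open : IsOpen U :=
    isOpen_Ioi.inter (isOpen_Iio.preimage continuous_coe_real_ereal)
  have hU_conv : Convex ℝ U := (convex_iff_ordConnected).2 ⟨fun x hx y hy z hz =>
    ⟨hx.1.trans_le hz.1, (EReal.coe_le_coe_iff.2 hz.2).trans_lt hy.2⟩⟩
  have hconc : ConcaveOn ℝ U m :=
    concaveOn_of_contDiffOn_deriv2_nonpos hU_conv hU_open hm_c2 fun z hz => hm_conc z hz.1 hz.2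
  have hint : ∀ b, Ioo 0 b ⊆ U → IntegrableOn (fun r => √(2 / m r)) (Ioo 0 b) := fun b hb => by
    simp_rw [Real.sqrt_div zero_le_two, div_eq_mul_inv]
    exact ((hconc.subset hb (convex_Ioo 0 b)).integrableOn_inv_sqrt
        fun x hx => hm_pos x (hb hx).1 (hb hx).2).const_mul √2
  have hint_lt : ∀ z : ℝ, 0 < z → (z : EReal) < S →
      IntegrableOn (fun r => √(2 / m r)) (Ioo 0 z) := fun z _ hzS =>
    hint z fun x hx => ⟨hx.1, (EReal.coe_lt_coe_iff.2 hx.2).trans hzS⟩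
  have hint_toReal : IntegrableOn (fun r => √(2 / m r)) (Ioo 0 S.toReal) :=
    hint S.toReal fun x hx =>
      ⟨hx.1, (EReal.coe_lt_coe_iff.2 hx.2).trans_le (EReal.coe_toReal_le (ne_bot_of_gt hS))⟩
  have hint_le : ∀ v ∈ {z : ℝ | 0 ≤ z ∧ (z : EReal) ≤ S},
      IntegrableOn (fun r => √(2 / m r)) (Ioo 0 v) := by
    rintro v ⟨hv0, hvS⟩
    rcases hv0.eq_or_lt with rfl | hv0
    · simp
    rcases hvS.lt_or_eq with hvS | rfl
    · exact hint_lt v hv0 hvS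
    · simpa using hint_toReal
  refine ⟨hint_lt, fun _ => hint_toReal, continuousOn_integral_Ioo (fun z hz => hz.1) hint_le,
    fun u hu v hv huv => integral_Ioo_lt_integral_Ioo hu.1 huv (hint_le v hv) fun x hx => ?_⟩
  exact Real.sqrt_pos.2 (div_pos two_pos (hm_pos x (hu.1.trans_lt hx.1)
    ((EReal.coe_lt_coe_iff.2 hx.2).trans_le hv.2)))

/-- Under condition (M) for `m` on `(0,S)` with `S ∈ (0,∞]`, the improper
integral `f(z) = ∫₀^z √(2/m(r)) dr` is finite for every `z ∈ (0,S)` (i.e. the integrand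
is integrable on `(0,z)`); if `S < ∞` then also `f(S)` is finite; and `f` is continuous
and strictly increasing on its domain `{z : 0 ≤ z, z ≤ S}`. -/
theorem f_finite_continuous_strictMono
    (S : EReal) (hS : 0 < S) (m : ℝ → ℝ)
    (hm_c2 : ContDiffOn ℝ 2 m {z : ℝ | 0 < z ∧ (z : EReal) < S})
    (hm_pos : ∀ z : ℝ, 0 < z → (z : EReal) < S → 0 < m z)
    (hm_conc : ∀ z : ℝ, 0 < z → (z : EReal) < S → deriv (deriv m) z ≤ 0)
    (hm0 : Tendsto m (𝓝[>] (0 : ℝ)) (𝓝 0))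
    (hmS : S ≠ ⊤ → Tendsto m (𝓝[<] S.toReal) (𝓝 0)) :
    (∀ z : ℝ, 0 < z → (z : EReal) < S →
      IntegrableOn (fun r => Real.sqrt (2 / m r)) (Ioo 0 z)) ∧
    (S ≠ ⊤ → IntegrableOn (fun r => Real.sqrt (2 / m r)) (Ioo 0 S.toReal)) ∧
    ContinuousOn (fun z => ∫ r in Ioo (0 : ℝ) z, Real.sqrt (2 / m r))
      {z : ℝ | 0 ≤ z ∧ (z : EReal) ≤ S} ∧
    StrictMonoOn (fun z => ∫ r in Ioo (0 : ℝ) z, Real.sqrt (2 / m r))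
      {z : ℝ | 0 ≤ z ∧ (z : EReal) ≤ S} :=
  f_finite_continuous_strictMono_general S hS m hm_c2 hm_pos hm_conc
end

section
/- Suppose S = ∞ and there exist z̃ > max(s₀,1), C₀ > 0 and γ₀ ∈ [0,1) such that m(z) ≥ C₀ z^{γ₀} for all z > z̃. Then there exists a constant C > 0 such that h(z) ≤ C (f(z)² + 1 + z^{2−γ₀}) for all z > 0. -/
/-!
On `[s₀, ∞)` the concave positive function `m` is bounded below by `c r ^ γ₀`: beyond `z̃` by
hypothesis, and on the compact stretch before it because a positive concave function on `(0, ∞)`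
grows at least linearly from the origin. Integrating `(z - r) / m r ≤ z r ^ (-γ₀) / c` gives
`h z ≤ z ^ (2 - γ₀) / (c (1 - γ₀))` for `z ≥ s₀`, while for `z ≤ s₀` the same linear lower bound
keeps `h z` bounded.
-/

open MeasureTheory Set Filter Topology

theorem concaveOn_of_contDiffOn_two_of_deriv2_nonpos {f : ℝ → ℝ} {s : Set ℝ} (hs : IsOpen s)
    (hconv : Convex ℝ s) (hf : ContDiffOn ℝ 2 f s) (hf'' : ∀ x ∈ s, deriv (deriv f) x ≤ 0) :
    ConcaveOn ℝ s f :=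
  concaveOn_of_deriv2_nonpos' hconv (hf.differentiableOn (by norm_num))
    ((hf.deriv_of_isOpen hs (m := 1) (by norm_num)).differentiableOn (by norm_num)) hf''

/-- Write `r` as a convex combination of `r / 2` and `a` and drop the nonnegative `m (r / 2)` term. -/
theorem ConcaveOn.div_mul_le_of_pos {m : ℝ → ℝ} (hconc : ConcaveOn ℝ (Ioi 0) m)
    (hm_pos : ∀ z, 0 < z → 0 < m z) {a r : ℝ} (hr : 0 < r) (hra : r ≤ a) :
    m a / (2 * a) * r ≤ m r := by
  have hd : 0 < a - r / 2 := by linarith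
  set t := (a - r) / (a - r / 2)
  set u := r / 2 / (a - r / 2)
  have ht : 0 ≤ t := div_nonneg (sub_nonneg.2 hra) hd.le
  have htu : t + u = 1 := by
    rw [← add_div, div_eq_one_iff_eq hd.ne']; ring
  have hcomb : t * (r / 2) + u * a = r := by
    rw [div_mul_eq_mul_div, div_mul_eq_mul_div, ← add_div, div_eq_iff hd.ne']; ring
  have key := hconc.2 (mem_Ioi.2 (half_pos hr)) (mem_Ioi.2 (hr.trans_le hra)) ht
    (by positivity) htu
  simp only [smul_eq_mul, hcomb] at key
  have hweight : r / (2 * a) ≤ u := by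
    simp only [u]; rw [div_div]; gcongr; linarith
  calc m a / (2 * a) * r = r / (2 * a) * m a := by ring
    _ ≤ u * m a := by gcongr; exact (hm_pos a (hr.trans_le hra)).le
    _ ≤ m r := by nlinarith [mul_nonneg ht (hm_pos (r / 2) (half_pos hr)).le]

theorem ConcaveOn.exists_mul_rpow_le {m : ℝ → ℝ} (hconc : ConcaveOn ℝ (Ioi 0) m)
    (hm_pos : ∀ z, 0 < z → 0 < m z) {s₀ z₁ C₀ γ : ℝ} (hs₀ : 0 < s₀) (hC₀ : 0 < C₀) (hγ : 0 ≤ γ)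
    (hlow : ∀ z, z₁ < z → C₀ * z ^ γ ≤ m z) :
    ∃ c > 0, ∀ r, s₀ ≤ r → c * r ^ γ ≤ m r := by
  set a := max z₁ s₀
  have ha : 0 < a := hs₀.trans_le (le_max_right _ _)
  have hma := hm_pos a ha
  refine ⟨min (m a / (2 * a) * s₀ / a ^ γ) C₀, lt_min (by positivity) hC₀, fun r hr => ?_⟩
  have hr0 : 0 < r := hs₀.trans_le hr
  rcases le_or_gt r a with hra | hra
  · calc min (m a / (2 * a) * s₀ / a ^ γ) C₀ * r ^ γ
        ≤ m a / (2 * a) * s₀ / a ^ γ * a ^ γ := by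
          gcongr
          exact min_le_left _ _
    _ = m a / (2 * a) * s₀ := div_mul_cancel₀ _ (Real.rpow_pos_of_pos ha γ).ne'
    _ ≤ m a / (2 * a) * r := by gcongr
    _ ≤ m r := hconc.div_mul_le_of_pos hm_pos hr0 hra
  · calc min (m a / (2 * a) * s₀ / a ^ γ) C₀ * r ^ γ ≤ C₀ * r ^ γ := by
          gcongr; exact min_le_right _ _
    _ ≤ m r := hlow r ((le_max_left _ _).trans_lt hra)

section IntegralBounds

variable {m : ℝ → ℝ} {s₀ z c : ℝ}

theorem integral_sub_div_le_of_le (hmc : ContinuousOn m (Ioi 0)) (hz : 0 < z) (hzs : z ≤ s₀)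
    (hc : 0 < c) (hlin : ∀ r, 0 < r → r ≤ s₀ → c * r ≤ m r) :
    ∫ r in s₀..z, (z - r) / m r ≤ s₀ / c := by
  have hm : ∀ r ∈ Icc z s₀, c * r ≤ m r ∧ 0 < c * r := fun r hr =>
    ⟨hlin r (hz.trans_le hr.1) hr.2, mul_pos hc (hz.trans_le hr.1)⟩
  have hint : IntervalIntegrable (fun r => (r - z) / m r) volume z s₀ :=
    (ContinuousOn.div (by fun_prop) (hmc.mono fun r hr => hz.trans_le hr.1)
      fun r hr => ((hm r hr).2.trans_le (hm r hr).1).ne').intervalIntegrable_of_Icc hzs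
  have hbound : ∀ r ∈ Icc z s₀, (r - z) / m r ≤ 1 / c := fun r hr =>
    calc (r - z) / m r ≤ r / (c * r) :=
          div_le_div₀ (hz.trans_le hr.1).le (by linarith) (hm r hr).2 (hm r hr).1
      _ = 1 / c := by field_simp [(hz.trans_le hr.1).ne']
  calc ∫ r in s₀..z, (z - r) / m r = ∫ r in z..s₀, (r - z) / m r := by
        rw [intervalIntegral.integral_symm, ← intervalIntegral.integral_neg]
        congr 1; ext r; ring
    _ ≤ ∫ _ in z..s₀, 1 / c := intervalIntegral.integral_mono_on hzs hint (by simp) hbound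
    _ = (s₀ - z) / c := by simp [div_eq_mul_inv]
    _ ≤ s₀ / c := by gcongr; linarith

theorem integral_sub_div_le_rpow (hmc : ContinuousOn m (Ioi 0)) (hs₀ : 0 < s₀) (hzs : s₀ ≤ z)
    (hc : 0 < c) {γ : ℝ} (hγ : γ < 1) (hpow : ∀ r, s₀ ≤ r → c * r ^ γ ≤ m r) :
    ∫ r in s₀..z, (z - r) / m r ≤ z ^ (2 - γ) / (c * (1 - γ)) := by
  have hz : 0 < z := hs₀.trans_le hzs
  have hm : ∀ r ∈ Icc s₀ z, 0 < c * r ^ γ := fun r hr =>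
    mul_pos hc (Real.rpow_pos_of_pos (hs₀.trans_le hr.1) γ)
  have hint : IntervalIntegrable (fun r => (z - r) / m r) volume s₀ z :=
    (ContinuousOn.div (by fun_prop) (hmc.mono fun r hr => hs₀.trans_le hr.1)
      fun r hr => ((hm r hr).trans_le (hpow r hr.1)).ne').intervalIntegrable_of_Icc hzs
  have hbound : ∀ r ∈ Icc s₀ z, (z - r) / m r ≤ z / c * r ^ (-γ) := fun r hr =>
    calc (z - r) / m r ≤ z / (c * r ^ γ) :=
          div_le_div₀ hz.le (by linarith [hr.1]) (hm r hr) (hpow r hr.1)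
      _ = z / c * r ^ (-γ) := by
          rw [Real.rpow_neg (hs₀.trans_le hr.1).le, div_mul_eq_div_div, div_eq_mul_inv]
  have hs₀pow : 0 ≤ s₀ ^ (1 - γ) := Real.rpow_nonneg hs₀.le _
  calc ∫ r in s₀..z, (z - r) / m r ≤ ∫ r in s₀..z, z / c * r ^ (-γ) :=
        intervalIntegral.integral_mono_on hzs hint
          ((intervalIntegral.intervalIntegrable_rpow' (by linarith)).const_mul _) hbound
    _ = z / c * ((z ^ (1 - γ) - s₀ ^ (1 - γ)) / (1 - γ)) := by
        rw [intervalIntegral.integral_const_mul, integral_rpow (Or.inl (by linarith))]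
        ring_nf
    _ ≤ z / c * (z ^ (1 - γ) / (1 - γ)) := by
        gcongr
        linarith
    _ = z ^ (2 - γ) / (c * (1 - γ)) := by
        rw [show (2 - γ) = 1 + (1 - γ) by ring, Real.rpow_add hz, Real.rpow_one]
        field_simp

end IntegralBounds

theorem h_upper_bound_power_growth_general
    (m : ℝ → ℝ)
    (hm_c2 : ContDiffOn ℝ 2 m (Ioi 0))
    (hm_pos : ∀ z : ℝ, 0 < z → 0 < m z)
    (hm_conc : ∀ z : ℝ, 0 < z → deriv (deriv m) z ≤ 0)
    (s₀ : ℝ) (hs₀ : 0 < s₀)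
    (ztilde C₀ γ₀ : ℝ) (hC₀ : 0 < C₀)
    (hγ₀ : γ₀ ∈ Ico (0 : ℝ) 1)
    (hlow : ∀ z : ℝ, ztilde < z → C₀ * z ^ γ₀ ≤ m z) :
    ∃ C : ℝ, 0 < C ∧ ∀ z : ℝ, 0 < z →
      (∫ r in s₀..z, (z - r) / m r) ≤
        C * ((∫ r in Ioo (0 : ℝ) z, Real.sqrt (2 / m r)) ^ 2 + 1 + z ^ (2 - γ₀)) := by
  have hconc : ConcaveOn ℝ (Ioi 0) m :=
    concaveOn_of_contDiffOn_two_of_deriv2_nonpos isOpen_Ioi (convex_Ioi 0) hm_c2 hm_conc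
  have hmc : ContinuousOn m (Ioi 0) := hm_c2.continuousOn
  set c₀ := m s₀ / (2 * s₀)
  have hc₀ : 0 < c₀ := by have := hm_pos s₀ hs₀; positivity
  obtain ⟨c, hc, hpow⟩ := hconc.exists_mul_rpow_le hm_pos hs₀ hC₀ hγ₀.1 hlow
  set A := s₀ / c₀
  set B := 1 / (c * (1 - γ₀))
  have hA : 0 < A := by positivity
  have hB : 0 < B := by have := sub_pos.2 hγ₀.2; positivity
  refine ⟨A + B, by positivity, fun z hz => ?_⟩
  have hzpow : 0 ≤ z ^ (2 - γ₀) := Real.rpow_nonneg hz.le _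
  have hh : ∫ r in s₀..z, (z - r) / m r ≤ A + B * z ^ (2 - γ₀) := by
    rcases le_total z s₀ with hzs | hzs
    · have := integral_sub_div_le_of_le hmc hz hzs hc₀ fun r hr hrs =>
        hconc.div_mul_le_of_pos hm_pos hr hrs
      nlinarith
    · have := integral_sub_div_le_rpow hmc hs₀ hzs hc hγ₀.2 hpow
      rw [div_eq_mul_one_div, mul_comm] at this
      linarith
  nlinarith [sq_nonneg (∫ r in Ioo (0 : ℝ) z, Real.sqrt (2 / m r))]

/-- For `S = ∞` and `m` satisfying (M) on `(0,∞)`, if there exist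
`z̃ > max(s₀,1)`, `C₀ > 0` and `γ₀ ∈ [0,1)` with `m(z) ≥ C₀ z^{γ₀}` for all `z > z̃`,
then there exists `C > 0` such that `h(z) ≤ C (f(z)² + 1 + z^{2−γ₀})` for all `z > 0`,
where `f(z) := ∫₀^z √(2/m(r)) dr` and `h(z) := ∫_{s₀}^z (z−r)/m(r) dr`. -/
theorem h_upper_bound_power_growth
    (m : ℝ → ℝ)
    (hm_c2 : ContDiffOn ℝ 2 m (Ioi 0))
    (hm_pos : ∀ z : ℝ, 0 < z → 0 < m z)
    (hm_conc : ∀ z : ℝ, 0 < z → deriv (deriv m) z ≤ 0)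
    (hm0 : Tendsto m (𝓝[>] (0 : ℝ)) (𝓝 0))
    (s₀ : ℝ) (hs₀ : 0 < s₀)
    (ztilde C₀ γ₀ : ℝ) (hzt : max s₀ 1 < ztilde) (hC₀ : 0 < C₀)
    (hγ₀ : γ₀ ∈ Ico (0 : ℝ) 1)
    (hlow : ∀ z : ℝ, ztilde < z → C₀ * z ^ γ₀ ≤ m z) :
    ∃ C : ℝ, 0 < C ∧ ∀ z : ℝ, 0 < z →
      (∫ r in s₀..z, (z - r) / m r) ≤
        C * ((∫ r in Ioo (0 : ℝ) z, Real.sqrt (2 / m r)) ^ 2 + 1 + z ^ (2 - γ₀)) :=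
  h_upper_bound_power_growth_general m hm_c2 hm_pos hm_conc s₀ hs₀ ztilde C₀ γ₀ hC₀ hγ₀ hlow
end

section
/- Suppose S = ∞ and there exist z̃ > max(s₀,1) and C₀ > 0 such that m(z) ≥ C₀ z for all z > z̃. Then there exists a constant C > 0 such that h(z) ≤ C (f(z)² + 1 + z log z + z) for all z > z̃. -/
open MeasureTheory Set Filter Topology

/-- For `S = ∞` and `m` satisfying (M) on `(0,∞)`, if there exist
`z̃ > max(s₀,1)` and `C₀ > 0` with `m(z) ≥ C₀ z` for all `z > z̃`, then there exists
`C > 0` such that `h(z) ≤ C (f(z)² + 1 + z log z + z)` for all `z > z̃`, where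
`f(z) := ∫₀^z √(2/m(r)) dr` and `h(z) := ∫_{s₀}^z (z−r)/m(r) dr`. -/
theorem h_upper_bound_linear_growth
    (m : ℝ → ℝ)
    (hm_c2 : ContDiffOn ℝ 2 m (Ioi 0))
    (hm_pos : ∀ z : ℝ, 0 < z → 0 < m z)
    (hm_conc : ∀ z : ℝ, 0 < z → deriv (deriv m) z ≤ 0)
    (hm0 : Tendsto m (𝓝[>] (0 : ℝ)) (𝓝 0))
    (s₀ : ℝ) (hs₀ : 0 < s₀)
    (ztilde C₀ : ℝ) (hzt : max s₀ 1 < ztilde) (hC₀ : 0 < C₀)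
    (hlow : ∀ z : ℝ, ztilde < z → C₀ * z ≤ m z) :
    ∃ C : ℝ, 0 < C ∧ ∀ z : ℝ, ztilde < z →
      (∫ r in s₀..z, (z - r) / m r) ≤
        C * ((∫ r in Ioo (0 : ℝ) z, Real.sqrt (2 / m r)) ^ 2 + 1
          + z * Real.log z + z) := by
  have hmc : ContinuousOn m (Ioi 0) := hm_c2.continuousOn
  have hs₀zt : s₀ < ztilde := lt_of_le_of_lt (le_max_left _ _) hzt
  have h1zt : (1 : ℝ) < ztilde := lt_of_le_of_lt (le_max_right _ _) hzt
  have hzt0 : (0 : ℝ) < ztilde := lt_trans one_pos h1zt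
  -- integrability of the integrand on subintervals of (0,∞)
  have hint : ∀ z a b : ℝ, 0 < a → a ≤ b →
      IntervalIntegrable (fun r => (z - r) / m r) volume a b := by
    intro z a b ha hab
    apply ContinuousOn.intervalIntegrable
    have hsub : uIcc a b ⊆ Ioi 0 := by
      rw [uIcc_of_le hab]
      intro x hx; exact lt_of_lt_of_le ha hx.1
    exact ((continuousOn_const.sub continuousOn_id).div (hmc.mono hsub)
      (fun x hx => ne_of_gt (hm_pos x (hsub hx))))
  -- bound on 1/m on [s₀, ztilde]
  obtain ⟨x, hx, hM⟩ := isCompact_Icc.exists_isMaxOn (nonempty_Icc.mpr hs₀zt.le)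
    (((hmc.mono (fun y hy => lt_of_lt_of_le hs₀ hy.1)).inv₀
      (fun y hy => ne_of_gt (hm_pos y (lt_of_lt_of_le hs₀ hy.1)))) :
      ContinuousOn (fun r => (m r)⁻¹) (Icc s₀ ztilde))
  set M : ℝ := (m x)⁻¹ with hMdef
  have hM0 : 0 < M := inv_pos.mpr (hm_pos x (lt_of_lt_of_le hs₀ hx.1))
  refine ⟨max ((ztilde - s₀) * M) (1 / C₀) + 1, by positivity, ?_⟩
  intro z hz
  set C : ℝ := max ((ztilde - s₀) * M) (1 / C₀) + 1 with hCdef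
  have hz1 : (1 : ℝ) < z := lt_trans h1zt hz
  have hz0 : (0 : ℝ) < z := lt_trans one_pos hz1
  have hlogz : 0 ≤ Real.log z := Real.log_nonneg hz1.le
  have hsplit : (∫ r in s₀..z, (z - r) / m r) =
      (∫ r in s₀..ztilde, (z - r) / m r) + (∫ r in ztilde..z, (z - r) / m r) :=
    (intervalIntegral.integral_add_adjacent_intervals
      (hint z s₀ ztilde hs₀ hs₀zt.le) (hint z ztilde z hzt0 hz.le)).symm
  -- first piece
  have hI1 : (∫ r in s₀..ztilde, (z - r) / m r) ≤ (ztilde - s₀) * (z * M) := by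
    have := intervalIntegral.integral_mono_on hs₀zt.le (hint z s₀ ztilde hs₀ hs₀zt.le)
      (intervalIntegrable_const (c := z * M)) (fun r hr => ?_)
    · rwa [intervalIntegral.integral_const, smul_eq_mul] at this
    · have hr0 : 0 < r := lt_of_lt_of_le hs₀ hr.1
      have hmr : 0 < m r := hm_pos r hr0
      have h1 : (z - r) / m r = (z - r) * (m r)⁻¹ := div_eq_mul_inv _ _
      rw [h1]
      apply mul_le_mul (by linarith [hr.1]) (hM hr) (by positivity) (by positivity)
  -- second piece
  have hI2 : (∫ r in ztilde..z, (z - r) / m r) ≤ z / C₀ * Real.log z := by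
    have hGint : IntervalIntegrable (fun r => z / C₀ * r⁻¹) volume ztilde z := by
      apply ContinuousOn.intervalIntegrable
      apply continuousOn_const.mul
      apply ContinuousOn.inv₀ continuousOn_id
      intro r hr
      rw [uIcc_of_le hz.le] at hr
      exact ne_of_gt (lt_of_lt_of_le hzt0 hr.1)
    have hmono : (∫ r in ztilde..z, (z - r) / m r) ≤ ∫ r in ztilde..z, z / C₀ * r⁻¹ := by
      apply intervalIntegral.integral_mono_ae_restrict hz.le
        (hint z ztilde z hzt0 hz.le) hGint
      have hne : ∀ᵐ r ∂(volume.restrict (Icc ztilde z)), r ≠ ztilde := by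
        apply ae_restrict_of_ae
        rw [ae_iff]
        simpa using measure_singleton (ztilde : ℝ)
      filter_upwards [ae_restrict_mem measurableSet_Icc, hne] with r hr hrne
      have hztr : ztilde < r := lt_of_le_of_ne hr.1 (Ne.symm hrne)
      have hr0 : 0 < r := lt_trans hzt0 hztr
      have hmr : C₀ * r ≤ m r := hlow r hztr
      have hCr : 0 < C₀ * r := by positivity
      have heq : z / C₀ * r⁻¹ = z / (C₀ * r) := by
        field_simp
      rw [heq]
      exact div_le_div₀ hz0.le (by linarith [hr.2]) hCr hmr
    have hGval : (∫ r in ztilde..z, z / C₀ * r⁻¹) = z / C₀ * Real.log (z / ztilde) := by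
      rw [intervalIntegral.integral_const_mul, integral_inv_of_pos hzt0 hz0]
    have hlogle : Real.log (z / ztilde) ≤ Real.log z := by
      rw [Real.log_div (ne_of_gt hz0) (ne_of_gt hzt0)]
      have := Real.log_nonneg h1zt.le
      linarith
    calc (∫ r in ztilde..z, (z - r) / m r) ≤ z / C₀ * Real.log (z / ztilde) := by
            rw [← hGval]; exact hmono
      _ ≤ z / C₀ * Real.log z := by
            apply mul_le_mul_of_nonneg_left hlogle (by positivity)
  -- assemble
  have hF : 0 ≤ (∫ r in Ioo (0 : ℝ) z, Real.sqrt (2 / m r)) ^ 2 := sq_nonneg _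
  have hCA : (ztilde - s₀) * M ≤ C - 1 := by
    simp only [hCdef]; linarith [le_max_left ((ztilde - s₀) * M) (1 / C₀)]
  have hCB : 1 / C₀ ≤ C - 1 := by
    simp only [hCdef]; linarith [le_max_right ((ztilde - s₀) * M) (1 / C₀)]
  have hC1 : (1 : ℝ) ≤ C := by
    have : 0 ≤ max ((ztilde - s₀) * M) (1 / C₀) :=
      le_trans (by positivity) (le_max_right _ _)
    simp only [hCdef]; linarith
  have hdivC : z / C₀ = (1 / C₀) * z := by ring
  rw [hsplit]
  clear_value M C
  have key : (ztilde - s₀) * (z * M) + z / C₀ * Real.log z ≤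
      C * (z * Real.log z + z) := by
    rw [hdivC]
    have h1 : (ztilde - s₀) * (z * M) ≤ (C - 1) * z := by
      have := mul_le_mul_of_nonneg_right hCA hz0.le
      nlinarith
    have h2 : (1 / C₀) * z * Real.log z ≤ (C - 1) * (z * Real.log z) := by
      have hzl : 0 ≤ z * Real.log z := by positivity
      nlinarith [mul_le_mul_of_nonneg_right hCB hzl]
    have hzl : 0 ≤ z * Real.log z := mul_nonneg hz0.le hlogz
    have h3 : (ztilde - s₀) * (z * M) + 1 / C₀ * z * Real.log z ≤
        (C - 1) * z + (C - 1) * (z * Real.log z) := by linarith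
    have h4 : (C - 1) * z + (C - 1) * (z * Real.log z) = C * (z * Real.log z + z)
        - (z + z * Real.log z) := by ring
    linarith
  have hCF : 0 ≤ C * ((∫ r in Ioo (0 : ℝ) z, Real.sqrt (2 / m r)) ^ 2 + 1) := by
    have : (0:ℝ) ≤ C := by linarith
    nlinarith
  have hfin : C * ((∫ r in Ioo (0 : ℝ) z, Real.sqrt (2 / m r)) ^ 2 + 1
      + z * Real.log z + z) = C * ((∫ r in Ioo (0 : ℝ) z, Real.sqrt (2 / m r)) ^ 2 + 1)
      + C * (z * Real.log z + z) := by ring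
  rw [hfin]
  linarith
end

section
/- The function f is three times differentiable on (0,S), and for every z ∈ (0,S) one has f'''(z)·f'(z) − 3·f''(z)² = −m''(z)/m(z)²; in particular, since m''(z) ≤ 0, it holds that f'''(z)·f'(z) ≥ 3·f''(z)² for all z ∈ (0,S). -/
open MeasureTheory Set Filter Topology

/-!
Concavity of `m` together with `m → 0` at `0⁺` makes `m r / r` antitone, so `m r ≥ (m w / w) r`
on `(0, w)` and the integrand `√(2 / m r)` is `O(r ^ (-1/2))`: `f` is finite and, by the
fundamental theorem of calculus, `f' = √(2 / m)`. Differentiating twice gives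
`f'' = -m' f' / (2 m)` and `f''' = f' (3 m' ^ 2 - 2 m m'') / (4 m ^ 2)`, and `f' ^ 2 = 2 / m`
turns `f''' f' - 3 f'' ^ 2` into `-m'' / m ^ 2`.
-/

theorem ConcaveOn.antitoneOn_div_self {m : ℝ → ℝ} {b : ℝ} (hconc : ConcaveOn ℝ (Ioo 0 b) m)
    (h0 : Tendsto m (𝓝[>] 0) (𝓝 0)) : AntitoneOn (fun x => m x / x) (Ioo 0 b) := by
  intro r hr w hw hrw
  have secant : ∀ᶠ ε in 𝓝[>] 0, (m ε - m r) / (r - ε) ≤ (m ε - m w) / (w - ε) := by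
    filter_upwards [Ioo_mem_nhdsGT hr.1] with ε hε
    have hεb : ε ∈ Ioo 0 b := ⟨hε.1, hε.2.trans hr.2⟩
    simpa only [Pi.neg_apply, neg_sub_neg] using
      hconc.neg.secant_mono hεb hr hw hε.2.ne' (hε.2.trans_le hrw).ne' hrw
  have hlim : ∀ x ≠ 0,
      Tendsto (fun ε => (m ε - m x) / (x - ε)) (𝓝[>] 0) (𝓝 ((0 - m x) / (x - 0))) :=
    fun x hx => (h0.sub_const _).div (tendsto_nhdsWithin_of_tendsto_nhds
      ((continuous_sub_left x).tendsto 0)) (by simpa using hx)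
  simpa only [zero_sub, sub_zero, neg_div, neg_le_neg_iff] using
    le_of_tendsto_of_tendsto (hlim r hr.1.ne') (hlim w hw.1.ne') secant

theorem integrableOn_sqrt_two_div_of_mul_le {m : ℝ → ℝ} {w c : ℝ} (hc : 0 < c)
    (hcont : ContinuousOn m (Ioo 0 w)) (hlin : ∀ r ∈ Ioo 0 w, c * r ≤ m r) :
    IntegrableOn (fun r => √(2 / m r)) (Ioo 0 w) := by
  have hpos : ∀ r ∈ Ioo 0 w, 0 < m r := fun r hr => (mul_pos hc hr.1).trans_le (hlin r hr)
  have hbound : IntegrableOn (fun r : ℝ => √(2 / c) * r ^ (-(1 / 2) : ℝ)) (Ioo 0 w) :=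
    ((intervalIntegral.intervalIntegrable_rpow' (by norm_num)).def'.mono_set fun r hr =>
      ⟨(min_le_left _ _).trans_lt hr.1, hr.2.le.trans (le_max_right _ _)⟩).const_mul _
  refine hbound.mono' ?_ ((ae_restrict_iff' measurableSet_Ioo).2 (.of_forall fun r hr => ?_))
  · exact (continuousOn_const.div hcont fun r hr => (hpos r hr).ne').sqrt.aestronglyMeasurable
      measurableSet_Ioo
  · have hr0 := hr.1
    rw [Real.norm_of_nonneg (Real.sqrt_nonneg _), Real.rpow_neg hr0.le, ← Real.sqrt_eq_rpow,
      ← div_eq_mul_inv, ← Real.sqrt_div' _ hr0.le, div_div]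
    exact Real.sqrt_le_sqrt (div_le_div_of_nonneg_left zero_le_two (by positivity) (hlin r hr))

theorem hasDerivAt_integral_Ioo_zero {g : ℝ → ℝ} {w : ℝ} (hw : 0 < w)
    (hint : IntegrableOn g (Ioo 0 w)) (hmeas : StronglyMeasurableAtFilter g (𝓝 w))
    (hcont : ContinuousAt g w) :
    HasDerivAt (fun u => ∫ r in Ioo 0 u, g r) (g w) w := by
  have hii : IntervalIntegrable g volume 0 w :=
    (intervalIntegrable_iff_integrableOn_Ioo_of_le hw.le).2 hint
  refine (intervalIntegral.integral_hasDerivAt_right hii hmeas hcont).congr_of_eventuallyEq ?_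
  filter_upwards [lt_mem_nhds hw] with u hu
  rw [intervalIntegral.integral_of_le hu.le, integral_Ioc_eq_integral_Ioo]

theorem hasDerivAt_integral_sqrt_two_div {m : ℝ → ℝ} {b w : ℝ}
    (hcont : ContinuousOn m (Ioo 0 b)) (hpos : ∀ r ∈ Ioo 0 b, 0 < m r)
    (hconc : ConcaveOn ℝ (Ioo 0 b) m) (h0 : Tendsto m (𝓝[>] 0) (𝓝 0)) (hw : w ∈ Ioo 0 b) :
    HasDerivAt (fun u => ∫ r in Ioo 0 u, √(2 / m r)) (√(2 / m w)) w := by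
  have hsub : Ioo 0 w ⊆ Ioo 0 b := Ioo_subset_Ioo_right hw.2.le
  have hg : ContinuousOn (fun r => √(2 / m r)) (Ioo 0 b) :=
    (continuousOn_const.div hcont fun r hr => (hpos r hr).ne').sqrt
  have hlin : ∀ r ∈ Ioo 0 w, m w / w * r ≤ m r := fun r hr => by
    have := hconc.antitoneOn_div_self h0 (hsub hr) hw hr.2.le
    rwa [le_div_iff₀ hr.1] at this
  exact hasDerivAt_integral_Ioo_zero hw.1
    (integrableOn_sqrt_two_div_of_mul_le (div_pos (hpos w hw) hw.1) (hcont.mono hsub) hlin)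
    (hg.stronglyMeasurableAtFilter isOpen_Ioo w hw) (hg.continuousAt (isOpen_Ioo.mem_nhds hw))

theorem HasDerivAt.sqrt_two_div {m : ℝ → ℝ} {m' x : ℝ} (hm : HasDerivAt m m' x) (hx : 0 < m x) :
    HasDerivAt (fun t => √(2 / m t)) (-(m' * √(2 / m x)) / (2 * m x)) x := by
  convert ((hasDerivAt_const x (2 : ℝ)).fun_div hm hx.ne').sqrt (by positivity) using 1
  have hs : √(2 / m x) ^ 2 = 2 / m x := Real.sq_sqrt (by positivity)
  field_simp
  rw [hs]
  field_simp
  ring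

theorem HasDerivAt.sqrt_two_div_second {m m₁ : ℝ → ℝ} {m₂ x : ℝ} (hm : HasDerivAt m (m₁ x) x)
    (hm₁ : HasDerivAt m₁ m₂ x) (hx : 0 < m x) :
    HasDerivAt (fun t => -(m₁ t * √(2 / m t)) / (2 * m t))
      (√(2 / m x) * (3 * m₁ x ^ 2 - 2 * m x * m₂) / (4 * m x ^ 2)) x := by
  refine ((hm₁.fun_mul (hm.sqrt_two_div hx)).fun_neg.fun_div (hm.const_mul 2)
    (by positivity)).congr_deriv ?_
  field_simp
  ring

section

variable {F m : ℝ → ℝ} {b x : ℝ}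

theorem hasDerivAt_deriv_of_eqOn_sqrt_two_div (hm : DifferentiableOn ℝ m (Ioo 0 b))
    (hpos : ∀ x ∈ Ioo 0 b, 0 < m x) (hF : EqOn (deriv F) (fun t => √(2 / m t)) (Ioo 0 b))
    (hx : x ∈ Ioo 0 b) :
    HasDerivAt (deriv F) (-(deriv m x * √(2 / m x)) / (2 * m x)) x :=
  ((hm.differentiableAt (isOpen_Ioo.mem_nhds hx)).hasDerivAt.sqrt_two_div
    (hpos x hx)).congr_of_eventuallyEq (hF.eventuallyEq_of_mem (isOpen_Ioo.mem_nhds hx))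

theorem hasDerivAt_deriv_deriv_of_eqOn_sqrt_two_div (hm : ContDiffOn ℝ 2 m (Ioo 0 b))
    (hpos : ∀ x ∈ Ioo 0 b, 0 < m x) (hF : EqOn (deriv F) (fun t => √(2 / m t)) (Ioo 0 b))
    (hx : x ∈ Ioo 0 b) :
    HasDerivAt (deriv (deriv F))
      (√(2 / m x) * (3 * deriv m x ^ 2 - 2 * m x * deriv (deriv m) x) / (4 * m x ^ 2)) x := by
  have hdm : DifferentiableOn ℝ m (Ioo 0 b) := hm.differentiableOn two_ne_zero
  have hddm : DifferentiableOn ℝ (deriv m) (Ioo 0 b) :=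
    (hm.deriv_of_isOpen isOpen_Ioo (m := 1) le_rfl).differentiableOn one_ne_zero
  have hF' : EqOn (deriv (deriv F)) (fun t => -(deriv m t * √(2 / m t)) / (2 * m t)) (Ioo 0 b) :=
    fun y hy => (hasDerivAt_deriv_of_eqOn_sqrt_two_div hdm hpos hF hy).deriv
  exact ((hdm.differentiableAt (isOpen_Ioo.mem_nhds hx)).hasDerivAt.sqrt_two_div_second
    (hddm.differentiableAt (isOpen_Ioo.mem_nhds hx)).hasDerivAt (hpos x hx)).congr_of_eventuallyEq
    (hF'.eventuallyEq_of_mem (isOpen_Ioo.mem_nhds hx))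

end

theorem f_third_derivative_identity_general
    (S : EReal) (m : ℝ → ℝ)
    (hm_c2 : ContDiffOn ℝ 2 m {z : ℝ | 0 < z ∧ (z : EReal) < S})
    (hm_pos : ∀ z : ℝ, 0 < z → (z : EReal) < S → 0 < m z)
    (hm_conc : ∀ z : ℝ, 0 < z → (z : EReal) < S → deriv (deriv m) z ≤ 0)
    (hm0 : Tendsto m (𝓝[>] (0 : ℝ)) (𝓝 0)) :
    ∀ z : ℝ, 0 < z → (z : EReal) < S →
      DifferentiableAt ℝ (fun z => ∫ r in Ioo (0 : ℝ) z, Real.sqrt (2 / m r)) z ∧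
      deriv (fun z => ∫ r in Ioo (0 : ℝ) z, Real.sqrt (2 / m r)) z = Real.sqrt (2 / m z) ∧
      DifferentiableAt ℝ (deriv (fun z => ∫ r in Ioo (0 : ℝ) z, Real.sqrt (2 / m r))) z ∧
      DifferentiableAt ℝ
        (deriv (deriv (fun z => ∫ r in Ioo (0 : ℝ) z, Real.sqrt (2 / m r)))) z ∧
      deriv (deriv (deriv (fun z => ∫ r in Ioo (0 : ℝ) z, Real.sqrt (2 / m r)))) z
          * deriv (fun z => ∫ r in Ioo (0 : ℝ) z, Real.sqrt (2 / m r)) z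
        - 3 * (deriv (deriv (fun z => ∫ r in Ioo (0 : ℝ) z, Real.sqrt (2 / m r))) z) ^ 2
        = -(deriv (deriv m) z) / (m z) ^ 2 ∧
      3 * (deriv (deriv (fun z => ∫ r in Ioo (0 : ℝ) z, Real.sqrt (2 / m r))) z) ^ 2
        ≤ deriv (deriv (deriv (fun z => ∫ r in Ioo (0 : ℝ) z, Real.sqrt (2 / m r)))) z
          * deriv (fun z => ∫ r in Ioo (0 : ℝ) z, Real.sqrt (2 / m r)) z := by
  intro z hz hzS
  obtain ⟨b, hzb, hbS⟩ := EReal.lt_iff_exists_real_btwn.1 hzS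
  have hV : Ioo 0 b ⊆ {z : ℝ | 0 < z ∧ (z : EReal) < S} :=
    fun x hx => ⟨hx.1, (EReal.coe_lt_coe_iff.2 hx.2).trans hbS⟩
  have hzV : z ∈ Ioo 0 b := ⟨hz, EReal.coe_lt_coe_iff.1 hzb⟩
  have hm : ContDiffOn ℝ 2 m (Ioo 0 b) := hm_c2.mono hV
  have hpos : ∀ x ∈ Ioo 0 b, 0 < m x := fun x hx => hm_pos x (hV hx).1 (hV hx).2
  have hdm : DifferentiableOn ℝ m (Ioo 0 b) := hm.differentiableOn two_ne_zero
  have hconc : ConcaveOn ℝ (Ioo 0 b) m :=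
    concaveOn_of_deriv2_nonpos' (convex_Ioo 0 b) hdm
      ((hm.deriv_of_isOpen isOpen_Ioo (m := 1) le_rfl).differentiableOn one_ne_zero)
      fun x hx => hm_conc x (hV hx).1 (hV hx).2
  set F := fun z => ∫ r in Ioo (0 : ℝ) z, √(2 / m r)
  have hF : ∀ x ∈ Ioo 0 b, HasDerivAt F (√(2 / m x)) x :=
    fun x hx => hasDerivAt_integral_sqrt_two_div hm.continuousOn hpos hconc hm0 hx
  have hF' : EqOn (deriv F) (fun t => √(2 / m t)) (Ioo 0 b) := fun x hx => (hF x hx).deriv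
  have hF'' := hasDerivAt_deriv_of_eqOn_sqrt_two_div hdm hpos hF' hzV
  have hF''' := hasDerivAt_deriv_deriv_of_eqOn_sqrt_two_div hm hpos hF' hzV
  have hid : deriv (deriv (deriv F)) z * deriv F z - 3 * deriv (deriv F) z ^ 2
      = -deriv (deriv m) z / m z ^ 2 := by
    have hmz : 0 < m z := hpos z hzV
    have hs : √(2 / m z) ^ 2 = 2 / m z := Real.sq_sqrt (by positivity)
    rw [hF'''.deriv, hF' hzV, hF''.deriv]
    field_simp
    rw [hs]
    field_simp
    ring
  refine ⟨(hF z hzV).differentiableAt, hF' hzV, hF''.differentiableAt,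
    hF'''.differentiableAt, hid, ?_⟩
  linarith [div_nonneg (neg_nonneg.2 (hm_conc z hz hzS)) (sq_nonneg (m z))]

/-- Under condition (M) for `m` on `(0,S)` with `S ∈ (0,∞]`, the function
`f(z) := ∫₀^z √(2/m(r)) dr` is three times differentiable on `(0,S)` with
`f'(z) = √(2/m(z))`, and for every `z ∈ (0,S)` one has
`f'''(z)·f'(z) − 3·f''(z)² = −m''(z)/m(z)²`; in particular, since `m'' ≤ 0`,
`f'''(z)·f'(z) ≥ 3·f''(z)²`. -/
theorem f_third_derivative_identity
    (S : EReal) (hS : 0 < S) (m : ℝ → ℝ)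
    (hm_c2 : ContDiffOn ℝ 2 m {z : ℝ | 0 < z ∧ (z : EReal) < S})
    (hm_pos : ∀ z : ℝ, 0 < z → (z : EReal) < S → 0 < m z)
    (hm_conc : ∀ z : ℝ, 0 < z → (z : EReal) < S → deriv (deriv m) z ≤ 0)
    (hm0 : Tendsto m (𝓝[>] (0 : ℝ)) (𝓝 0))
    (hmS : S ≠ ⊤ → Tendsto m (𝓝[<] S.toReal) (𝓝 0)) :
    ∀ z : ℝ, 0 < z → (z : EReal) < S →
      DifferentiableAt ℝ (fun z => ∫ r in Ioo (0 : ℝ) z, Real.sqrt (2 / m r)) z ∧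
      deriv (fun z => ∫ r in Ioo (0 : ℝ) z, Real.sqrt (2 / m r)) z = Real.sqrt (2 / m z) ∧
      DifferentiableAt ℝ (deriv (fun z => ∫ r in Ioo (0 : ℝ) z, Real.sqrt (2 / m r))) z ∧
      DifferentiableAt ℝ
        (deriv (deriv (fun z => ∫ r in Ioo (0 : ℝ) z, Real.sqrt (2 / m r)))) z ∧
      deriv (deriv (deriv (fun z => ∫ r in Ioo (0 : ℝ) z, Real.sqrt (2 / m r)))) z
          * deriv (fun z => ∫ r in Ioo (0 : ℝ) z, Real.sqrt (2 / m r)) z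
        - 3 * (deriv (deriv (fun z => ∫ r in Ioo (0 : ℝ) z, Real.sqrt (2 / m r))) z) ^ 2
        = -(deriv (deriv m) z) / (m z) ^ 2 ∧
      3 * (deriv (deriv (fun z => ∫ r in Ioo (0 : ℝ) z, Real.sqrt (2 / m r))) z) ^ 2
        ≤ deriv (deriv (deriv (fun z => ∫ r in Ioo (0 : ℝ) z, Real.sqrt (2 / m r)))) z
          * deriv (fun z => ∫ r in Ioo (0 : ℝ) z, Real.sqrt (2 / m r)) z :=
  f_third_derivative_identity_general S m hm_c2 hm_pos hm_conc hm0
end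

section
/- Let S ∈ (0,∞), β₁, β₂ ∈ (2/3, 1] and m(z) := z^{β₁}(S−z)^{β₂} for z ∈ (0,S). Then f(S) := ∫₀^S √(2/m(r)) dr is finite, lim_{z→0⁺} m'(z)² f(z) = 0, and lim_{z→S⁻} m'(z)² (f(S) − f(z)) = 0; that is, m satisfies condition (M-S). -/
/-!
Near `0` the mobility is `z ^ β₁` times a factor that is continuous at `0`, so
`m' z = O(z ^ (β₁ - 1))` and `√(2 / m r) = O(r ^ (-β₁ / 2))`; integrating,
`f z = O(z ^ (1 - β₁ / 2))`, hence `m'(z) ^ 2 * f z = O(z ^ (3 β₁ / 2 - 1)) → 0` as `β₁ > 2 / 3`.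
The reflection `z ↦ S - z` swaps `β₁` and `β₂` and turns `f S - f z` into the integral over
`(0, S - z)` for the reflected mobility, so the endpoint `S` reduces to the endpoint `0`.
-/

open MeasureTheory Set Filter Topology Asymptotics intervalIntegral

theorem Asymptotics.IsBigO.of_eventuallyEq_mul {α : Type*} {l : Filter α} {f g h : α → ℝ} {c : ℝ}
    (hh : Tendsto h l (𝓝 c)) (hf : f =ᶠ[l] fun x => g x * h x) : f =O[l] g :=
  ((isBigO_refl g l).mul (hh.isBigO_one ℝ)).congr' hf.symm (by simp)

theorem tendsto_const_sub_nhdsLT (a : ℝ) : Tendsto (fun z => a - z) (𝓝[<] a) (𝓝[>] 0) := by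
  refine tendsto_nhdsWithin_iff.2 ⟨?_, ?_⟩
  · simpa using (tendsto_const_nhds.sub tendsto_id : Tendsto (fun z => a - z) (𝓝 a) _).mono_left
      nhdsWithin_le_nhds
  · filter_upwards [self_mem_nhdsWithin] with z (hz : z < a) using sub_pos.2 hz

theorem isBigO_setIntegral_Ioo_zero {g : ℝ → ℝ} {c : ℝ} (hc : -1 < c)
    (hg : g =O[𝓝[>] 0] fun r => r ^ c) :
    (fun z => ∫ r in Ioo 0 z, g r) =O[𝓝[>] 0] fun z => z ^ (c + 1) := by
  obtain ⟨C, hC⟩ := hg.bound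
  obtain ⟨δ, hδ, hδC⟩ := mem_nhdsGT_iff_exists_Ioo_subset.1 hC
  refine IsBigO.of_bound (C / (c + 1)) ?_
  filter_upwards [Ioo_mem_nhdsGT hδ] with z hz
  have hbound : ∀ r ∈ Ioo 0 z, ‖g r‖ ≤ C * r ^ c := fun r hr => by
    simpa [abs_of_pos (Real.rpow_pos_of_pos hr.1 c)] using hδC ⟨hr.1, hr.2.trans hz.2⟩
  have hint : IntegrableOn (fun r => C * r ^ c) (Ioo 0 z) :=
    ((intervalIntegrable_iff_integrableOn_Ioo_of_le hz.1.le).1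
      ((intervalIntegrable_rpow' hc).const_mul C))
  calc ‖∫ r in Ioo 0 z, g r‖ ≤ ∫ r in Ioo 0 z, C * r ^ c :=
        norm_integral_le_of_norm_le hint (ae_restrict_of_forall_mem measurableSet_Ioo hbound)
    _ = C / (c + 1) * ‖z ^ (c + 1)‖ := by
        rw [MeasureTheory.integral_const_mul, ← integral_Ioc_eq_integral_Ioo,
          ← integral_of_le hz.1.le, integral_rpow (Or.inl hc), Real.zero_rpow (by linarith),
          sub_zero, Real.norm_of_nonneg (Real.rpow_nonneg hz.1.le _)]
        ring

theorem tendsto_sq_mul_nhdsGT_zero {d F : ℝ → ℝ} {β : ℝ} (hβ : 2 / 3 < β)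
    (hd : d =O[𝓝[>] 0] fun z => z ^ (β - 1)) (hF : F =O[𝓝[>] 0] fun z => z ^ (-(β / 2) + 1)) :
    Tendsto (fun z => d z ^ 2 * F z) (𝓝[>] 0) (𝓝 0) := by
  have hO : (fun z => d z ^ 2 * F z) =O[𝓝[>] 0] fun z => z ^ (3 / 2 * β - 1) := by
    refine ((hd.pow 2).mul hF).congr' EventuallyEq.rfl ?_
    filter_upwards [self_mem_nhdsWithin] with z (hz : 0 < z)
    rw [← Real.rpow_natCast, ← Real.rpow_mul hz.le, ← Real.rpow_add hz]
    ring_nf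
  refine hO.trans_tendsto ?_
  simpa [Real.zero_rpow (by linarith : 3 / 2 * β - 1 ≠ 0)] using
    (Real.continuousAt_rpow_const 0 (3 / 2 * β - 1) (Or.inr (by linarith))).tendsto.mono_left
      nhdsWithin_le_nhds

theorem intervalIntegrable_rpow_mul_rpow_sub {S a b : ℝ} (hS : 0 < S) (ha : -1 < a)
    (hb : -1 < b) :
    IntervalIntegrable (fun r => r ^ a * (S - r) ^ b) volume 0 S := by
  have hhalf : ∀ {a b : ℝ}, -1 < a →
      IntervalIntegrable (fun r => r ^ a * (S - r) ^ b) volume 0 (S / 2) := fun ha =>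
    (intervalIntegrable_rpow' ha).mul_continuousOn <|
      (continuousOn_const.sub continuousOn_id).rpow_const fun r hr => Or.inl <| by
        rw [uIcc_of_le (by linarith)] at hr
        exact (sub_pos.2 (show r < S by linarith [hr.2])).ne'
  have hright : IntervalIntegrable (fun r => r ^ a * (S - r) ^ b) volume (S / 2) S := by
    simpa [sub_half, mul_comm] using ((hhalf (b := a) hb).comp_sub_left S).symm
  exact (hhalf ha).trans hright

theorem setIntegral_Ioo_sub_setIntegral_Ioo {g : ℝ → ℝ} {S z : ℝ} (hg : IntegrableOn g (Ioo 0 S))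
    (hz : z ∈ Icc 0 S) :
    (∫ r in Ioo 0 S, g r) - ∫ r in Ioo 0 z, g r = ∫ r in Ioo 0 (S - z), g (S - r) := by
  have hgS := (intervalIntegrable_iff_integrableOn_Ioo_of_le (hz.1.trans hz.2)).2 hg
  have hgz := (intervalIntegrable_iff_integrableOn_Ioo_of_le hz.1).2
    (hg.mono_set (Ioo_subset_Ioo_right hz.2))
  simp only [← integral_Ioc_eq_integral_Ioo, ← integral_of_le (hz.1.trans hz.2),
    ← integral_of_le hz.1, ← integral_of_le (sub_nonneg.2 hz.2)]
  rw [integral_interval_sub_left hgS hgz, integral_comp_sub_left, sub_sub_cancel, sub_zero]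

noncomputable def mobility (S β₁ β₂ z : ℝ) : ℝ := z ^ β₁ * (S - z) ^ β₂

theorem mobility_swap (S β₁ β₂ z : ℝ) : mobility S β₂ β₁ z = mobility S β₁ β₂ (S - z) := by
  rw [mobility, mobility, sub_sub_cancel, mul_comm]

section

variable {S : ℝ} (β₁ β₂ : ℝ)

theorem hasDerivAt_mobility {z : ℝ} (hz : 0 < z) (hzS : z < S) :
    HasDerivAt (mobility S β₁ β₂)
      (β₁ * z ^ (β₁ - 1) * (S - z) ^ β₂ - β₂ * z ^ β₁ * (S - z) ^ (β₂ - 1)) z := by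
  have hsub : HasDerivAt (fun z => (S - z) ^ β₂) (β₂ * (S - z) ^ (β₂ - 1) * -1) z := by
    simpa using
      ((hasDerivAt_id z).const_sub S).rpow_const (p := β₂) (Or.inl (sub_ne_zero.2 hzS.ne'))
  exact ((Real.hasDerivAt_rpow_const (p := β₁) (Or.inl hz.ne')).mul hsub).congr_deriv (by ring)

theorem isBigO_deriv_mobility (hS : 0 < S) :
    deriv (mobility S β₁ β₂) =O[𝓝[>] 0] fun z => z ^ (β₁ - 1) := by
  refine IsBigO.of_eventuallyEq_mul ((ContinuousAt.tendsto (x := 0)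
    (f := fun z => β₁ * (S - z) ^ β₂ - β₂ * z * (S - z) ^ (β₂ - 1))
    (by fun_prop (disch := simp [hS.ne']))).mono_left nhdsWithin_le_nhds) ?_
  filter_upwards [Ioo_mem_nhdsGT hS] with z hz
  rw [(hasDerivAt_mobility β₁ β₂ hz.1 hz.2).deriv, Real.rpow_sub_one hz.1.ne']
  field_simp [hz.1.ne']

theorem sqrt_two_div_mobility {r : ℝ} (hr : 0 < r) (hrS : r < S) :
    √(2 / mobility S β₁ β₂ r) = √2 * (r ^ (-(β₁ / 2)) * (S - r) ^ (-(β₂ / 2))) := by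
  have hSr : 0 < S - r := sub_pos.2 hrS
  rw [mobility, Real.sqrt_div' _ (by positivity), Real.sqrt_mul (by positivity),
    Real.sqrt_eq_rpow (r ^ β₁), Real.sqrt_eq_rpow ((S - r) ^ β₂), ← Real.rpow_mul hr.le,
    ← Real.rpow_mul hSr.le, Real.rpow_neg hr.le, Real.rpow_neg hSr.le]
  field_simp

theorem isBigO_sqrt_two_div_mobility (hS : 0 < S) :
    (fun r => √(2 / mobility S β₁ β₂ r)) =O[𝓝[>] 0] fun r => r ^ (-(β₁ / 2)) := by
  refine IsBigO.of_eventuallyEq_mul ((ContinuousAt.tendsto (x := 0)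
    (f := fun r => √2 * (S - r) ^ (-(β₂ / 2)))
    (by fun_prop (disch := simp [hS.ne']))).mono_left nhdsWithin_le_nhds) ?_
  filter_upwards [Ioo_mem_nhdsGT hS] with r hr
  rw [sqrt_two_div_mobility β₁ β₂ hr.1 hr.2]
  ring

theorem integrableOn_sqrt_two_div_mobility (hS : 0 < S) (hβ₁ : β₁ < 2) (hβ₂ : β₂ < 2) :
    IntegrableOn (fun r => √(2 / mobility S β₁ β₂ r)) (Ioo 0 S) := by
  have h := ((intervalIntegrable_rpow_mul_rpow_sub hS (a := -(β₁ / 2)) (b := -(β₂ / 2))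
    (by linarith) (by linarith)).const_mul √2)
  refine ((intervalIntegrable_iff_integrableOn_Ioo_of_le hS.le).1 h).congr_fun
    (fun r hr => ?_) measurableSet_Ioo
  exact (sqrt_two_div_mobility β₁ β₂ hr.1 hr.2).symm

theorem tendsto_sq_deriv_mobility_mul_setIntegral (hS : 0 < S) (hβ₁ : 2 / 3 < β₁)
    (hβ₁' : β₁ < 2) :
    Tendsto
      (fun z => deriv (mobility S β₁ β₂) z ^ 2 * ∫ r in Ioo 0 z, √(2 / mobility S β₁ β₂ r))
      (𝓝[>] 0) (𝓝 0) :=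
  tendsto_sq_mul_nhdsGT_zero hβ₁ (isBigO_deriv_mobility β₁ β₂ hS)
    (isBigO_setIntegral_Ioo_zero (by linarith) (isBigO_sqrt_two_div_mobility β₁ β₂ hS))

end

/-- Let `S ∈ (0,∞)`, `β₁, β₂ ∈ (2/3, 1]` and `m(z) := z^{β₁}(S−z)^{β₂}`
on `(0,S)`. Then `f(S) := ∫₀^S √(2/m(r)) dr` is finite (the integrand is integrable on
`(0,S)`), `lim_{z→0⁺} m'(z)² f(z) = 0`, and `lim_{z→S⁻} m'(z)² (f(S) − f(z)) = 0`;
that is, `m` satisfies condition (M-S). -/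
theorem doubly_degenerate_mobility_satisfies_MS
    (S : ℝ) (hS : 0 < S)
    (β₁ β₂ : ℝ) (hβ₁ : β₁ ∈ Ioc (2 / 3 : ℝ) 1) (hβ₂ : β₂ ∈ Ioc (2 / 3 : ℝ) 1)
    (m : ℝ → ℝ) (hm : ∀ z : ℝ, m z = z ^ β₁ * (S - z) ^ β₂) :
    IntegrableOn (fun r => Real.sqrt (2 / m r)) (Ioo 0 S) ∧
    Tendsto
      (fun z : ℝ => (deriv m z) ^ 2 * ∫ r in Ioo (0 : ℝ) z, Real.sqrt (2 / m r))
      (𝓝[>] (0 : ℝ)) (𝓝 0) ∧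
    Tendsto
      (fun z : ℝ => (deriv m z) ^ 2 *
        ((∫ r in Ioo (0 : ℝ) S, Real.sqrt (2 / m r))
          - ∫ r in Ioo (0 : ℝ) z, Real.sqrt (2 / m r)))
      (𝓝[<] S) (𝓝 0) := by
  obtain rfl : m = mobility S β₁ β₂ := funext hm
  obtain ⟨hβ₁, hβ₁'⟩ := hβ₁
  obtain ⟨hβ₂, hβ₂'⟩ := hβ₂
  have hint := integrableOn_sqrt_two_div_mobility β₁ β₂ hS (by linarith) (by linarith)
  refine ⟨hint, tendsto_sq_deriv_mobility_mul_setIntegral β₁ β₂ hS hβ₁ (by linarith), ?_⟩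
  refine ((tendsto_sq_deriv_mobility_mul_setIntegral β₂ β₁ hS hβ₂ (by linarith)).comp
    (tendsto_const_sub_nhdsLT S)).congr' ?_
  filter_upwards [Ioo_mem_nhdsLT hS] with z hz
  have hswap : mobility S β₂ β₁ = fun w => mobility S β₁ β₂ (S - w) :=
    funext (mobility_swap S β₁ β₂)
  rw [setIntegral_Ioo_sub_setIntegral_Ioo hint ⟨hz.1.le, hz.2.le⟩, Function.comp_apply, hswap,
    deriv_comp_const_sub, sub_sub_cancel, neg_sq]
end

section
/- Let S = ∞ and m satisfy (M), and let 0 < δ ≤ δ' < sup_{z>0} m(z). Then: (i) the equation m(z) = δ has a unique solution z_δ > 0, and z_δ ≤ z_{δ'}; (ii) the approximated mobility m_δ(z) := m(z + z_δ) − δ satisfies m_δ(z) > 0 for z > 0, lim_{z→0⁺} m_δ(z) = 0 and m_δ''(z) ≤ 0 on (0,∞); (iii) m_{δ'}(z) ≤ m_δ(z) ≤ m(z) and m_δ'(z) ≤ m'(z) for all z > 0; (iv) consequently f(z) ≤ f_δ(z) ≤ f_{δ'}(z) for all z ≥ 0, where f_δ(z) := ∫₀^z √(2/m_δ(r)) dr.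 -/
/-!
Condition (M) makes `m` concave on `(0, ∞)`, and a concave function bounded below there is
nondecreasing, and strictly increasing at every point where it is below one of its later values;
with `m → 0` at `0⁺` the intermediate value theorem then gives the unique roots `z_δ ≤ z_{δ'}`. Concavity also makes the
increments `m (x + h) - m x` nonincreasing in `x`: comparing at `x = z_δ` and at `x → 0⁺` gives
`m_{δ'} ≤ m_δ ≤ m`. Finally the chord of the concave `m_{δ'}` from `0` gives
`m_{δ'} r ≥ r m_{δ'} z / z`, so all three integrands are `O(r^(-1/2))`, hence integrable, and the
pointwise comparison integrates.
-/

open MeasureTheory Set Filter Topology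

section Concave

variable {s : Set ℝ} {f : ℝ → ℝ}

/-- The slope of `f` on `[x, y]` bounds the slopes further right, so a decrease would drive `f`
to `-∞`. -/
theorem ConcaveOn.monotoneOn_Ioi_of_bddBelow {a : ℝ} (hf : ConcaveOn ℝ (Ioi a) f)
    (hb : BddBelow (f '' Ioi a)) : MonotoneOn f (Ioi a) := by
  obtain ⟨b, hb⟩ := hb
  intro x hx y hy hxy
  by_contra! hlt
  have hxy' : x < y := hxy.lt_of_ne (by rintro rfl; exact lt_irrefl _ hlt)
  set σ := (f y - f x) / (y - x) with hσ
  have hσ_neg : σ < 0 := div_neg_of_neg_of_pos (by linarith) (by linarith)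
  have hby : b ≤ f y := hb ⟨y, hy, rfl⟩
  set t := y + (f y - b) / -σ + 1 with ht
  have hyt : y < t := by
    have : 0 ≤ (f y - b) / -σ := div_nonneg (by linarith) (by linarith)
    linarith
  have htI : t ∈ Ioi a := lt_trans (mem_Ioi.1 hy) hyt
  have hslope := hf.slope_anti_adjacent hx htI hxy' hyt
  rw [← hσ, div_le_iff₀ (by linarith)] at hslope
  have hstep : σ * (t - y) = σ - (f y - b) := by
    have := hσ_neg.ne
    rw [ht]; field_simp; ring
  linarith [hb ⟨t, htI, rfl⟩]

theorem ConcaveOn.apply_lt_apply_of_monotoneOn (hf : ConcaveOn ℝ s f) (hmono : MonotoneOn f s)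
    {x y w : ℝ} (hx : x ∈ s) (hy : y ∈ s) (hw : w ∈ s) (hxy : x < y) (hxw : f x < f w) :
    f x < f y := by
  by_contra! hyx
  rcases le_or_gt y w with hyw | hwy
  · linarith [hf.right_le_of_le_left'' hx hw hxy hyw hyx]
  · linarith [hmono hw hy hwy.le]

/-- `y` and `x + h` are mirror points of `[x, y + h]`; add the two concavity inequalities. -/
theorem ConcaveOn.apply_add_sub_apply_le (hf : ConcaveOn ℝ s f) {x y h : ℝ} (hx : x ∈ s)
    (hyh : y + h ∈ s) (hxy : x ≤ y) (hh : 0 ≤ h) :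
    f (y + h) - f y ≤ f (x + h) - f x := by
  rcases (add_le_add hxy hh).eq_or_lt with hxyh | hxyh
  · rw [add_zero] at hxyh
    have hyx : y = x := le_antisymm (by linarith) hxy
    have hh0 : h = 0 := by linarith
    subst hyx hh0
    rfl
  set L := y + h - x
  have hL : 0 < L := by simp only [L]; linarith [hxyh]
  have hsum : h / L + (y - x) / L = 1 := by field_simp; ring
  have hsum' : (y - x) / L + h / L = 1 := by linarith
  have h₁ := hf.2 hx hyh (div_nonneg hh hL.le) (div_nonneg (by linarith) hL.le) hsum
  have h₂ := hf.2 hx hyh (div_nonneg (by linarith) hL.le) (div_nonneg hh hL.le) hsum'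
  simp only [smul_eq_mul] at h₁ h₂
  have e₁ : h / L * x + (y - x) / L * (y + h) = y := by field_simp; ring
  have e₂ : (y - x) / L * x + h / L * (y + h) = x + h := by field_simp; ring
  rw [e₁] at h₁
  rw [e₂] at h₂
  linear_combination h₁ + h₂ - (f x + f (y + h)) * hsum

theorem ConcaveOn.div_mul_le_of_apply_zero (hf : ConcaveOn ℝ s f) (h0 : 0 ∈ s) {r z : ℝ}
    (hz : z ∈ s) (hf0 : f 0 = 0) (hr : 0 ≤ r) (hrz : r ≤ z) : f z / z * r ≤ f r := by
  have hb : r / z ≤ 1 := div_le_one_of_le₀ hrz (hr.trans hrz)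
  have h := hf.2 h0 hz (sub_nonneg.2 hb) (div_nonneg hr (hr.trans hrz)) (sub_add_cancel 1 _)
  simp only [smul_eq_mul, mul_zero, zero_add, hf0] at h
  rwa [div_mul_cancel_of_imp (fun hz0 => le_antisymm (hz0 ▸ hrz) hr), div_mul_comm] at h

end Concave

theorem concaveOn_Ioi_of_deriv2_nonpos {m : ℝ → ℝ} (hm : ContDiffOn ℝ 2 m (Ioi 0))
    (hm'' : ∀ z : ℝ, 0 < z → deriv (deriv m) z ≤ 0) : ConcaveOn ℝ (Ioi 0) m :=
  concaveOn_of_deriv2_nonpos' (convex_Ioi 0) (hm.differentiableOn (by norm_num))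
    ((hm.deriv_of_isOpen isOpen_Ioi (by norm_num : (1 : WithTop ℕ∞) + 1 ≤ 2)).differentiableOn
      one_ne_zero) hm''

section IntegralComparison

variable {g g₁ g₂ : ℝ → ℝ} {a k z : ℝ}

theorem integrableOn_sqrt_div_of_mul_le (ha : 0 ≤ a) (hk : 0 < k) (hz : 0 < z)
    (hg : ContinuousOn g (Ioo 0 z)) (hlb : ∀ r ∈ Ioo 0 z, k * r ≤ g r) :
    IntegrableOn (fun r => √(a / g r)) (Ioo 0 z) := by
  have hpos : ∀ r ∈ Ioo 0 z, 0 < g r := fun r hr => (mul_pos hk hr.1).trans_le (hlb r hr)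
  have hdom : IntegrableOn (fun r : ℝ => √(a / k) * r ^ (-(1 / 2) : ℝ)) (Ioo 0 z) :=
    ((intervalIntegral.integrableOn_Ioo_rpow_iff hz).2 (by norm_num)).const_mul _
  refine hdom.mono' ((continuousOn_const.div hg fun r hr => (hpos r hr).ne').sqrt
    |>.aestronglyMeasurable measurableSet_Ioo) ?_
  filter_upwards [ae_restrict_mem measurableSet_Ioo] with r hr
  rw [Real.norm_of_nonneg (Real.sqrt_nonneg _), Real.rpow_neg hr.1.le, ← Real.sqrt_eq_rpow,
    ← div_eq_mul_inv, ← Real.sqrt_div' _ hr.1.le, div_div]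
  exact Real.sqrt_le_sqrt (div_le_div_of_nonneg_left ha (mul_pos hk hr.1) (hlb r hr))

theorem setIntegral_sqrt_div_le_of_le (ha : 0 ≤ a) (hk : 0 < k) (hz : 0 < z)
    (hg₁ : ContinuousOn g₁ (Ioo 0 z)) (hg₂ : ContinuousOn g₂ (Ioo 0 z))
    (hlb : ∀ r ∈ Ioo 0 z, k * r ≤ g₁ r) (hle : ∀ r ∈ Ioo 0 z, g₁ r ≤ g₂ r) :
    ∫ r in Ioo 0 z, √(a / g₂ r) ≤ ∫ r in Ioo 0 z, √(a / g₁ r) :=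
  setIntegral_mono_on
    (integrableOn_sqrt_div_of_mul_le ha hk hz hg₂ fun r hr => (hlb r hr).trans (hle r hr))
    (integrableOn_sqrt_div_of_mul_le ha hk hz hg₁ hlb) measurableSet_Ioo fun r hr =>
      Real.sqrt_le_sqrt (div_le_div_of_nonneg_left ha ((mul_pos hk hr.1).trans_le (hlb r hr))
        (hle r hr))

end IntegralComparison

section ApproximatedMobility

variable {m : ℝ → ℝ} {c d z₀ : ℝ}

theorem existsUnique_pos_eq_of_concaveOn (hcont : ContinuousOn m (Ioi 0))
    (hm0 : Tendsto m (𝓝[>] 0) (𝓝 0)) (hconc : ConcaveOn ℝ (Ioi 0) m)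
    (hmono : MonotoneOn m (Ioi 0)) (hd : 0 < d) (hz₀ : 0 < z₀) (hdz₀ : d < m z₀) :
    ∃ c : ℝ, 0 < c ∧ m c = d ∧ ∀ z : ℝ, 0 < z → m z = d → z = c := by
  obtain ⟨a, hma, ha⟩ := ((hm0.eventually (gt_mem_nhds hd)).and (Ioo_mem_nhdsGT hz₀)).exists
  obtain ⟨c, hc, hmc⟩ := intermediate_value_Icc ha.2.le
    (hcont.mono fun x hx => ha.1.trans_le hx.1) ⟨hma.le, hdz₀.le⟩
  have hc0 : 0 < c := ha.1.trans_le hc.1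
  have hlt : ∀ x y : ℝ, 0 < x → x < y → m x = d → m x < m y := fun x y hx hxy hmx =>
    hconc.apply_lt_apply_of_monotoneOn hmono hx (hx.trans hxy) hz₀ hxy (hmx ▸ hdz₀)
  refine ⟨c, hc0, hmc, fun z hz hmz => ?_⟩
  rcases lt_trichotomy z c with hzc | rfl | hcz
  · linarith [hlt z c hz hzc hmz]
  · rfl
  · linarith [hlt c z hc0 hcz hmc]

theorem shift_sub_pos (hconc : ConcaveOn ℝ (Ioi 0) m) (hmono : MonotoneOn m (Ioi 0))
    (hc : 0 < c) (hmc : m c = d) (hz₀ : 0 < z₀) (hdz₀ : d < m z₀) {z : ℝ} (hz : 0 < z) :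
    0 < m (z + c) - d := by
  rw [sub_pos, ← hmc]
  exact hconc.apply_lt_apply_of_monotoneOn hmono hc (add_pos hz hc) hz₀ (by linarith)
    (hmc ▸ hdz₀)

theorem tendsto_shift_sub (hcont : ContinuousOn m (Ioi 0)) (hc : 0 < c) (hmc : m c = d) :
    Tendsto (fun z => m (z + c) - d) (𝓝[>] 0) (𝓝 0) := by
  have h : ContinuousAt (fun z => m (z + c) - d) 0 :=
    ((hcont.continuousAt (Ioi_mem_nhds (by simpa using hc))).comp_of_eq
      (continuous_add_const c).continuousAt (zero_add c)).sub continuousAt_const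
  simpa [hmc] using h.tendsto.mono_left nhdsWithin_le_nhds

theorem continuousOn_shift_sub (hcont : ContinuousOn m (Ioi 0)) (hc : 0 ≤ c) :
    ContinuousOn (fun z => m (z + c) - d) (Ioi 0) :=
  (hcont.comp (continuousOn_id.add continuousOn_const) fun _ hz =>
    add_pos_of_pos_of_nonneg hz hc).sub continuousOn_const

theorem shift_sub_le_shift_sub (hconc : ConcaveOn ℝ (Ioi 0) m) {c' d' : ℝ} (hc : 0 < c)
    (hcc' : c ≤ c') (hmc : m c = d) (hmc' : m c' = d') {z : ℝ} (hz : 0 ≤ z) :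
    m (z + c') - d' ≤ m (z + c) - d := by
  have h := hconc.apply_add_sub_apply_le (h := c' - c) hc
    (show z + c + (c' - c) ∈ Ioi 0 by simp only [mem_Ioi]; linarith) (by linarith)
    (by linarith)
  rw [add_assoc, add_sub_cancel, hmc, hmc'] at h
  linarith

theorem shift_sub_le (hcont : ContinuousOn m (Ioi 0)) (hm0 : Tendsto m (𝓝[>] 0) (𝓝 0))
    (hconc : ConcaveOn ℝ (Ioi 0) m) (hc : 0 < c) (hmc : m c = d) {z : ℝ} (hz : 0 < z) :
    m (z + c) - d ≤ m z := by
  have hlim : Tendsto (fun ε => m (ε + c) - d - m ε) (𝓝[>] 0) (𝓝 (0 - 0)) :=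
    (tendsto_shift_sub hcont hc hmc).sub hm0
  have hinc : ∀ᶠ ε in 𝓝[>] 0, m (z + c) - d - m z ≤ m (ε + c) - d - m ε := by
    filter_upwards [Ioc_mem_nhdsGT hz] with ε hε
    linarith [hconc.apply_add_sub_apply_le hε.1 (show z + c ∈ Ioi 0 from add_pos hz hc) hε.2
      hc.le]
  linarith [ge_of_tendsto hlim hinc]

theorem deriv_shift_sub (c d : ℝ) :
    deriv (fun x => m (x + c) - d) = fun x => deriv m (x + c) := by
  funext x
  rw [deriv_sub_const, deriv_comp_add_const]

theorem div_mul_le_shift_sub (hconc : ConcaveOn ℝ (Ioi 0) m) (hc : 0 < c) (hmc : m c = d)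
    {r z : ℝ} (hr : 0 ≤ r) (hrz : r ≤ z) :
    (m (z + c) - d) / z * r ≤ m (r + c) - d := by
  have hmem : ∀ {x : ℝ}, 0 ≤ x → x ∈ (fun x => c + x) ⁻¹' Ioi 0 := fun hx => by
    simp only [mem_preimage, mem_Ioi]; linarith
  simpa [sub_eq_add_neg] using ((hconc.translate_left c).add_const (-d)).div_mul_le_of_apply_zero
    (hmem le_rfl) (hmem (hr.trans hrz)) (by simp [hmc]) hr hrz

theorem setIntegral_sqrt_div_shift_sub_le (hcont : ContinuousOn m (Ioi 0))
    (hm0 : Tendsto m (𝓝[>] 0) (𝓝 0)) (hconc : ConcaveOn ℝ (Ioi 0) m) {c' d' a z : ℝ}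
    (hc : 0 < c) (hcc' : c ≤ c') (hmc : m c = d) (hmc' : m c' = d')
    (hpos' : ∀ z : ℝ, 0 < z → 0 < m (z + c') - d') (ha : 0 ≤ a) (hz : 0 ≤ z) :
    ∫ r in Ioo 0 z, √(a / m r) ≤ ∫ r in Ioo 0 z, √(a / (m (r + c) - d)) ∧
      ∫ r in Ioo 0 z, √(a / (m (r + c) - d)) ≤
        ∫ r in Ioo 0 z, √(a / (m (r + c') - d')) := by
  rcases hz.eq_or_lt with rfl | hz
  · simp
  have hc' : 0 < c' := hc.trans_le hcc'
  have hk : 0 < (m (z + c') - d') / z := div_pos (hpos' z hz) hz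
  have hlb : ∀ r ∈ Ioo 0 z, (m (z + c') - d') / z * r ≤ m (r + c') - d' :=
    fun r hr => div_mul_le_shift_sub hconc hc' hmc' hr.1.le hr.2.le
  have hle' : ∀ r ∈ Ioo 0 z, m (r + c') - d' ≤ m (r + c) - d :=
    fun r hr => shift_sub_le_shift_sub hconc hc hcc' hmc hmc' hr.1.le
  have hle : ∀ r ∈ Ioo 0 z, m (r + c) - d ≤ m r :=
    fun r hr => shift_sub_le hcont hm0 hconc hc hmc hr.1
  have hIoo : Ioo 0 z ⊆ Ioi 0 := Ioo_subset_Ioi_self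
  exact ⟨setIntegral_sqrt_div_le_of_le ha hk hz ((continuousOn_shift_sub hcont hc.le).mono hIoo)
      (hcont.mono hIoo) (fun r hr => (hlb r hr).trans (hle' r hr)) hle,
    setIntegral_sqrt_div_le_of_le ha hk hz ((continuousOn_shift_sub hcont hc'.le).mono hIoo)
      ((continuousOn_shift_sub hcont hc.le).mono hIoo) hlb hle'⟩

end ApproximatedMobility

/-- Let `S = ∞`, `m` satisfy (M), and `0 < δ ≤ δ' < sup_{z>0} m(z)`. Then:
(i) `m(z) = δ` has a unique solution `z_δ > 0`, and `z_δ ≤ z_{δ'}`;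
(ii) `m_δ(z) := m(z + z_δ) − δ` satisfies `m_δ > 0` on `(0,∞)`, `m_δ(z) → 0` as `z → 0⁺`
and `m_δ'' ≤ 0` on `(0,∞)`;
(iii) `m_{δ'}(z) ≤ m_δ(z) ≤ m(z)` and `m_δ'(z) ≤ m'(z)` for all `z > 0`;
(iv) consequently `f(z) ≤ f_δ(z) ≤ f_{δ'}(z)` for all `z ≥ 0`, where
`f_δ(z) := ∫₀^z √(2/m_δ(r)) dr`. -/
theorem approximated_mobility_properties
    (m : ℝ → ℝ)
    (hm_c2 : ContDiffOn ℝ 2 m (Ioi 0))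
    (hm_pos : ∀ z : ℝ, 0 < z → 0 < m z)
    (hm_conc : ∀ z : ℝ, 0 < z → deriv (deriv m) z ≤ 0)
    (hm0 : Tendsto m (𝓝[>] (0 : ℝ)) (𝓝 0))
    (δ δ' : ℝ) (hδ : 0 < δ) (hδδ' : δ ≤ δ')
    (hδ'sup : ∃ z : ℝ, 0 < z ∧ δ' < m z) :
    ∃ zδ zδ' : ℝ,
      (0 < zδ ∧ m zδ = δ ∧ ∀ z : ℝ, 0 < z → m z = δ → z = zδ) ∧
      (0 < zδ' ∧ m zδ' = δ' ∧ ∀ z : ℝ, 0 < z → m z = δ' → z = zδ') ∧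
      zδ ≤ zδ' ∧
      (∀ z : ℝ, 0 < z → 0 < m (z + zδ) - δ) ∧
      Tendsto (fun z => m (z + zδ) - δ) (𝓝[>] (0 : ℝ)) (𝓝 0) ∧
      (∀ z : ℝ, 0 < z → deriv (deriv (fun x => m (x + zδ) - δ)) z ≤ 0) ∧
      (∀ z : ℝ, 0 < z →
        m (z + zδ') - δ' ≤ m (z + zδ) - δ ∧
        m (z + zδ) - δ ≤ m z ∧
        deriv (fun x => m (x + zδ) - δ) z ≤ deriv m z) ∧
      (∀ z : ℝ, 0 ≤ z →
        (∫ r in Ioo (0 : ℝ) z, Real.sqrt (2 / m r)) ≤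
          (∫ r in Ioo (0 : ℝ) z, Real.sqrt (2 / (m (r + zδ) - δ))) ∧
        (∫ r in Ioo (0 : ℝ) z, Real.sqrt (2 / (m (r + zδ) - δ))) ≤
          (∫ r in Ioo (0 : ℝ) z, Real.sqrt (2 / (m (r + zδ') - δ')))) := by
  obtain ⟨z₀, hz₀, hδ'z₀⟩ := hδ'sup
  have hcont : ContinuousOn m (Ioi 0) := hm_c2.continuousOn
  have hconc := concaveOn_Ioi_of_deriv2_nonpos hm_c2 hm_conc
  have hmono := hconc.monotoneOn_Ioi_of_bddBelow
    ⟨0, by rintro _ ⟨x, hx, rfl⟩; exact (hm_pos x hx).le⟩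
  have hδz₀ : δ < m z₀ := hδδ'.trans_lt hδ'z₀
  obtain ⟨zδ, hzδ, hmzδ, huδ⟩ :=
    existsUnique_pos_eq_of_concaveOn hcont hm0 hconc hmono hδ hz₀ hδz₀
  obtain ⟨zδ', hzδ', hmzδ', huδ'⟩ :=
    existsUnique_pos_eq_of_concaveOn hcont hm0 hconc hmono (hδ.trans_le hδδ') hz₀ hδ'z₀
  have hle : zδ ≤ zδ' := by
    by_contra! h
    have := hconc.apply_lt_apply_of_monotoneOn hmono hzδ' hzδ hz₀ h (hmzδ' ▸ hδ'z₀)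
    linarith
  refine ⟨zδ, zδ', ⟨hzδ, hmzδ, huδ⟩, ⟨hzδ', hmzδ', huδ'⟩, hle,
    fun z => shift_sub_pos hconc hmono hzδ hmzδ hz₀ hδz₀, tendsto_shift_sub hcont hzδ hmzδ,
    fun z hz => ?_, fun z hz => ⟨shift_sub_le_shift_sub hconc hzδ hle hmzδ hmzδ' hz.le,
      shift_sub_le hcont hm0 hconc hzδ hmzδ hz, ?_⟩,
    fun z => setIntegral_sqrt_div_shift_sub_le hcont hm0 hconc hzδ hle hmzδ hmzδ'
      (fun _ => shift_sub_pos hconc hmono hzδ' hmzδ' hz₀ hδ'z₀) zero_le_two⟩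
  · rw [deriv_shift_sub, deriv_comp_add_const]
    exact hm_conc _ (add_pos hz hzδ)
  · rw [deriv_shift_sub]
    exact hconc.antitoneOn_deriv (fun x hx => hm_c2.differentiableOn (by norm_num) x hx
      |>.differentiableAt (Ioi_mem_nhds hx)) hz (add_pos hz hzδ) (by linarith)
end

section
/- Let S = ∞ and m satisfy (M), let (δ_k)_{k∈ℕ} be a vanishing sequence in (0, δ̄) with δ̄ < sup m, and set g := f^{−1} and g_{δ_k} := f_{δ_k}^{−1}, where z_{δ_k} is the unique solution of m(z) = δ_k, m_{δ_k}(z) := m(z + z_{δ_k}) − δ_k and f_{δ_k}(z) := ∫₀^z √(2/m_{δ_k}(r)) dr. Then there exists a subsequence of (g_{δ_k})_{k∈ℕ} that converges locally uniformly on [0,∞) to g. -/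
/-!
Concavity of `m` makes it nondecreasing, so `z_δ → 0`, and gives the shifted profiles
`m(r + z_δ) - δ` a common linear lower bound `c r` on each bounded interval. Hence the integrands
`√(2 / m_δ)` are dominated by a multiple of `r^{-1/2}`, and dominated convergence yields
`f_δ → f` pointwise. Since all the `f_δ` and `f` are strictly increasing, their inverses converge
pointwise, and pointwise convergence of monotone functions to a continuous limit is locally
uniform; so the whole sequence converges, and no proper subsequence is needed.
-/

open MeasureTheory Set Filter Topology

theorem ConcaveOn.monotoneOn_of_forall_le {f : ℝ → ℝ} {c C : ℝ} (hf : ConcaveOn ℝ (Ioi c) f)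
    (hC : ∀ x ∈ Ioi c, C ≤ f x) : MonotoneOn f (Ioi c) := by
  intro x hx y hy hxy
  rcases hxy.eq_or_lt with rfl | hxy
  · rfl
  by_contra! hyx
  -- Past `y` the graph stays below the secant through `x` and `y`, which has negative slope.
  set κ := (f x - f y) / (y - x)
  have hκ : 0 < κ := div_pos (sub_pos.2 hyx) (sub_pos.2 hxy)
  set t := y + (f y - C) / κ + 1
  have hyt : y < t := by
    have : 0 ≤ (f y - C) / κ := div_nonneg (sub_nonneg.2 (hC y hy)) hκ.le
    linarith
  have ht : t ∈ Ioi c := hy.out.trans hyt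
  have hslope := hf.slope_anti_adjacent hx ht hxy hyt
  rw [div_le_iff₀ (sub_pos.2 hyt), show (f y - f x) / (y - x) = -κ by ring] at hslope
  have hκt : -κ * (t - y) = -(f y - C) - κ := by
    simp only [t]
    field_simp
    ring
  linarith [hC t ht]

theorem ConcaveOn.mul_le_apply_add_sub {f : ℝ → ℝ} (hf : ConcaveOn ℝ (Ioi 0) f)
    (hmono : MonotoneOn f (Ioi 0)) {z zs r L : ℝ} (hz : 0 < z) (hzs : z < zs) (hr : 0 < r)
    (hrL : r ≤ L) : (f zs - f z) / (zs + L) * r ≤ f (r + z) - f z := by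
  have hR : zs + L ∈ Ioi (0 : ℝ) := show (0 : ℝ) < zs + L by linarith
  have hsecant : (f (zs + L) - f z) / (zs + L - z) ≤ (f (r + z) - f z) / r := by
    have := hf.neg.secant_mono (a := z) hz (show (0 : ℝ) < r + z by linarith) hR
      (by linarith) (by linarith) (by linarith)
    rw [Pi.neg_apply, Pi.neg_apply, Pi.neg_apply, neg_sub_neg, neg_sub_neg,
      add_sub_cancel_right, ← neg_sub (f (r + z)), ← neg_sub (f (zs + L)), neg_div, neg_div,
      neg_le_neg_iff] at this
    exact this
  have hgrowth : f zs - f z ≤ f (zs + L) - f z :=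
    sub_le_sub_right (hmono (hz.trans hzs) hR (by linarith)) _
  have hnum : 0 ≤ f zs - f z := sub_nonneg.2 (hmono hz (hz.trans hzs) hzs.le)
  calc (f zs - f z) / (zs + L) * r ≤ (f (zs + L) - f z) / (zs + L - z) * r := by
        gcongr <;> linarith
    _ ≤ (f (r + z) - f z) / r * r := by gcongr
    _ = f (r + z) - f z := div_mul_cancel₀ _ hr.ne'

theorem MonotoneOn.tendsto_nhds_zero_of_tendsto_comp {ι : Type*} {l : Filter ι} {m : ℝ → ℝ}
    {x : ι → ℝ} (hmono : MonotoneOn m (Ioi 0)) (hpos : ∀ z, 0 < z → 0 < m z)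
    (hx : ∀ i, 0 < x i) (hlim : Tendsto (m ∘ x) l (𝓝 0)) : Tendsto x l (𝓝 0) := by
  refine tendsto_order.2 ⟨fun lo hlo => Eventually.of_forall fun i => hlo.trans (hx i),
    fun hi hhi => ?_⟩
  filter_upwards [hlim.eventually_lt_const (hpos hi hhi)] with i hi
  by_contra! h
  exact (hmono hhi (hx i) h).not_gt hi

theorem sqrt_two_div_le_of_mul_le {c r y : ℝ} (hc : 0 < c) (hr : 0 < r) (hy : c * r ≤ y) :
    √(2 / y) ≤ √(2 / c) * r ^ (-(1 / 2) : ℝ) := by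
  calc √(2 / y) ≤ √(2 / (c * r)) := Real.sqrt_le_sqrt (by gcongr)
    _ = √(2 / c) * r ^ (-(1 / 2) : ℝ) := by
      rw [Real.rpow_neg hr.le, ← Real.sqrt_eq_rpow, ← Real.sqrt_inv, ← Real.sqrt_mul (by positivity),
        ← div_eq_mul_inv, div_div]

theorem StrictMonoOn.monotoneOn_of_rightInvOn {f g : ℝ → ℝ} {s t : Set ℝ}
    (hf : StrictMonoOn f s) (hmaps : MapsTo g t s) (hinv : RightInvOn g f t) :
    MonotoneOn g t := by
  intro x hx y hy hxy
  rw [← hf.le_iff_le (hmaps hx) (hmaps hy), hinv hx, hinv hy]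
  exact hxy

theorem continuousOn_Ici_of_monotoneOn_of_surjOn {g : ℝ → ℝ} {a b : ℝ}
    (hmono : MonotoneOn g (Ici a)) (hmaps : MapsTo g (Ici a) (Ici b))
    (hsurj : SurjOn g (Ici a) (Ici b)) : ContinuousOn g (Ici a) := by
  have : Continuous hmaps.restrict :=
    Monotone.continuous_of_surjective (fun x y hxy => hmono x.2 y.2 hxy)
      (hmaps.restrict_surjective_iff.2 hsurj)
  exact continuousOn_iff_continuous_domRestrict.2 (continuous_subtype_val.comp this)

theorem tendsto_of_apply_eq_of_monotoneOn {ι : Type*} {l : Filter ι} {F : ι → ℝ → ℝ}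
    {f : ℝ → ℝ} {a x : ℝ} {xs : ι → ℝ} (hf : StrictMonoOn f (Ici a))
    (hF : ∀ i, MonotoneOn (F i) (Ici a)) (hlim : ∀ z ∈ Ioi a, Tendsto (F · z) l (𝓝 (f z)))
    (hx : a ≤ x) (hxs : ∀ i, a ≤ xs i) (heq : ∀ i, F i (xs i) = f x) :
    Tendsto xs l (𝓝 x) := by
  refine tendsto_order.2 ⟨fun lo hlo => ?_, fun hi hhi => ?_⟩
  · rcases lt_or_ge lo a with hloa | halo
    · exact Eventually.of_forall fun i => hloa.trans_le (hxs i)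
    obtain ⟨z, hloz, hzx⟩ := exists_between hlo
    have hz : a < z := halo.trans_lt hloz
    filter_upwards [(hlim z hz).eventually_lt_const (hf hz.le hx hzx)] with i hi
    by_contra! h
    exact (hF i (hxs i) hz.le (h.trans hloz.le)).not_gt (heq i ▸ hi)
  · have hz : a < hi := hx.trans_lt hhi
    filter_upwards [(hlim hi hz).eventually_const_lt (hf hx hz.le hhi)] with i hi
    by_contra! h
    exact (hF i hz.le (hxs i) h).not_gt (heq i ▸ hi)

theorem tendstoLocallyUniformlyOn_Ici_of_monotoneOn {ι : Type*} {l : Filter ι}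
    {F : ι → ℝ → ℝ} {f : ℝ → ℝ} {a : ℝ} (hF : ∀ i, MonotoneOn (F i) (Ici a))
    (hf : ContinuousOn f (Ici a)) (hlim : ∀ x ∈ Ici a, Tendsto (F · x) l (𝓝 (f x))) :
    TendstoLocallyUniformlyOn F f l (Ici a) := by
  rw [Metric.tendstoLocallyUniformlyOn_iff]
  intro ε hε x (hx : a ≤ x)
  obtain ⟨η, hη, hfη⟩ := Metric.continuousWithinAt_iff.1 (hf x hx) (ε / 4) (by positivity)
  have hnear : ∀ y, a ≤ y → |y - x| < η → |f y - f x| < ε / 4 := fun y hy hyx => by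
    simpa [Real.dist_eq] using hfη (mem_Ici.2 hy) (by rwa [Real.dist_eq])
  -- `f` varies by less than `ε / 4` on `[lo, x + η / 2]`, and monotonicity squeezes each `F i y`
  -- between the values of `F i` at the endpoints, which are close to those of `f`.
  set lo := max a (x - η / 2)
  have hlo : a ≤ lo := le_max_left _ _
  have hlo_ge : x - η / 2 ≤ lo := le_max_right _ _
  have hlo_le : lo ≤ x := max_le hx (by linarith)
  have hhi : a ≤ x + η / 2 := by linarith
  have hflo := hnear lo hlo (by rw [abs_lt]; constructor <;> linarith)
  have hfhi := hnear _ hhi (by rw [abs_lt]; constructor <;> linarith)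
  refine ⟨Ici a ∩ Ioo (x - η / 2) (x + η / 2),
    inter_mem_nhdsWithin _ (Ioo_mem_nhds (by linarith) (by linarith)), ?_⟩
  filter_upwards [Metric.tendsto_nhds.1 (hlim lo hlo) (ε / 4) (by positivity),
    Metric.tendsto_nhds.1 (hlim _ hhi) (ε / 4) (by positivity)] with i hilo hihi
  rintro y ⟨hy : a ≤ y, hy₁, hy₂⟩
  have hfy := hnear y hy (by rw [abs_lt]; constructor <;> linarith)
  have hFlo : F i lo ≤ F i y := hF i hlo hy (max_le hy hy₁.le)
  have hFhi : F i y ≤ F i (x + η / 2) := hF i hy hhi hy₂.le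
  rw [Real.dist_eq] at hilo hihi ⊢
  rw [abs_lt] at hilo hihi hflo hfhi hfy ⊢
  constructor <;> linarith

noncomputable def primitive (s : ℝ → ℝ) (z : ℝ) : ℝ := ∫ r in Ioo 0 z, s r

section Primitive

variable {s : ℝ → ℝ}

@[simp]
theorem primitive_zero : primitive s 0 = 0 := by
  simp [primitive]

theorem primitive_eq_intervalIntegral {z : ℝ} (hz : 0 ≤ z) :
    primitive s z = ∫ r in (0 : ℝ)..z, s r := by
  rw [intervalIntegral.integral_of_le hz, integral_Ioc_eq_integral_Ioo, primitive]

theorem strictMonoOn_primitive (hs : ∀ r, 0 < r → 0 < s r)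
    (hint : ∀ z, 0 < z → IntegrableOn s (Ioo 0 z)) : StrictMonoOn (primitive s) (Ici 0) := by
  intro u (hu : 0 ≤ u) v (hv : 0 ≤ v) huv
  have hint' : ∀ a b, 0 ≤ a → a ≤ b → IntervalIntegrable s volume a b := fun a b ha hab =>
    (intervalIntegrable_iff_integrableOn_Ioo_of_le hab).2 <|
      (hint (b + 1) (by linarith)).mono_set (Ioo_subset_Ioo ha (by linarith))
  rw [primitive_eq_intervalIntegral hu, primitive_eq_intervalIntegral hv,
    ← intervalIntegral.integral_add_adjacent_intervals (hint' 0 u le_rfl hu)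
      (hint' u v hu huv.le), lt_add_iff_pos_right]
  exact intervalIntegral.intervalIntegral_pos_of_pos_on (hint' u v hu huv.le)
    (fun x hx => hs x (hu.trans_lt hx.1)) huv

variable {g : ℝ → ℝ}

theorem integrableOn_Ioo_of_leftInverse (hleft : ∀ z, 0 ≤ z → g (primitive s z) = z) {z : ℝ}
    (hz : 0 < z) : IntegrableOn s (Ioo 0 z) := by
  by_contra hni
  have hg0 := hleft 0 le_rfl
  have hgz := hleft z hz.le
  rw [primitive, integral_undef hni] at hgz
  rw [primitive_zero] at hg0
  exact hz.ne' (hgz.symm.trans hg0)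

end Primitive

section ShiftedProfile

variable {m : ℝ → ℝ} {δbar zs : ℝ}

theorem mul_le_shift_sub (hconc : ConcaveOn ℝ (Ioi 0) m) (hmono : MonotoneOn m (Ioi 0))
    (hzs : 0 < zs) (hδbar : δbar < m zs) {z d r L : ℝ} (hz : 0 < z) (hmz : m z = d) (hd : d ≤ δbar)
    (hr : 0 < r) (hrL : r ≤ L) : (m zs - δbar) / (zs + L) * r ≤ m (r + z) - d := by
  have hzzs : z < zs := by
    by_contra! h
    exact (hδbar.trans_le (hmono hzs hz h)).not_ge (hmz ▸ hd)
  calc (m zs - δbar) / (zs + L) * r ≤ (m zs - m z) / (zs + L) * r := by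
        gcongr
        · linarith
        · rw [hmz]; exact hd
    _ ≤ m (r + z) - m z := hconc.mul_le_apply_add_sub hmono hz hzzs hr hrL
    _ = m (r + z) - d := by rw [hmz]

theorem shift_sub_pos_s16 (hconc : ConcaveOn ℝ (Ioi 0) m) (hmono : MonotoneOn m (Ioi 0))
    (hzs : 0 < zs) (hδbar : δbar < m zs) {z d r : ℝ} (hz : 0 < z) (hmz : m z = d)
    (hd : d ≤ δbar) (hr : 0 < r) : 0 < m (r + z) - d :=
  (mul_pos (div_pos (sub_pos.2 hδbar) (by linarith)) hr).trans_le
    (mul_le_shift_sub hconc hmono hzs hδbar hz hmz hd hr le_rfl)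

variable {δ zδ : ℕ → ℝ}

theorem tendsto_primitive_shift (hconc : ConcaveOn ℝ (Ioi 0) m)
    (hmono : MonotoneOn m (Ioi 0)) (hcont : ContinuousOn m (Ioi 0))
    (hpos : ∀ z, 0 < z → 0 < m z) (hzs : 0 < zs) (hδbar : δbar < m zs)
    (hδ : ∀ k, δ k ≤ δbar) (hδ0 : Tendsto δ atTop (𝓝 0))
    (hzδ : ∀ k, 0 < zδ k ∧ m (zδ k) = δ k) {z : ℝ} (hz : 0 < z) :
    Tendsto (fun k => primitive (fun r => √(2 / (m (r + zδ k) - δ k))) z) atTop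
      (𝓝 (primitive (fun r => √(2 / m r)) z)) := by
  set c := (m zs - δbar) / (zs + z)
  have hc : 0 < c := div_pos (sub_pos.2 hδbar) (by linarith)
  have hz0 : Tendsto zδ atTop (𝓝 0) :=
    hmono.tendsto_nhds_zero_of_tendsto_comp hpos (fun k => (hzδ k).1)
      (hδ0.congr fun k => ((hzδ k).2).symm)
  have hbound : IntegrableOn (fun r => √(2 / c) * r ^ (-(1 / 2) : ℝ)) (Ioo 0 z) :=
    ((intervalIntegrable_iff_integrableOn_Ioo_of_le hz.le).1
      (intervalIntegral.intervalIntegrable_rpow' (by norm_num))).const_mul _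
  refine tendsto_integral_of_dominated_convergence _ (fun k => ?_) hbound (fun k => ?_) ?_
  · have hcont_shift : ContinuousOn (fun r => m (r + zδ k)) (Ioi 0) :=
      hcont.comp (continuousOn_id.add continuousOn_const) fun r (hr : 0 < r) =>
        show 0 < r + zδ k by linarith [(hzδ k).1]
    refine ContinuousOn.aestronglyMeasurable ?_ measurableSet_Ioo
    refine (continuousOn_const.div (hcont_shift.sub continuousOn_const) fun r hr => ?_).sqrt.mono
      Ioo_subset_Ioi_self
    exact (shift_sub_pos_s16 hconc hmono hzs hδbar (hzδ k).1 (hzδ k).2 (hδ k) hr).ne'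
  · rw [ae_restrict_iff' measurableSet_Ioo]
    refine ae_of_all _ fun r hr => ?_
    rw [Real.norm_of_nonneg (Real.sqrt_nonneg _)]
    exact sqrt_two_div_le_of_mul_le hc hr.1
      (mul_le_shift_sub hconc hmono hzs hδbar (hzδ k).1 (hzδ k).2 (hδ k) hr.1 hr.2.le)
  · rw [ae_restrict_iff' measurableSet_Ioo]
    refine ae_of_all _ fun r hr => ?_
    have hshift : Tendsto (fun k => m (r + zδ k) - δ k) atTop (𝓝 (m r)) := by
      have hr' : Tendsto (fun k => r + zδ k) atTop (𝓝 r) := by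
        simpa using (tendsto_const_nhds (x := r)).add hz0
      simpa using ((hcont.continuousAt (Ioi_mem_nhds hr.1)).tendsto.comp hr').sub hδ0
    exact ((continuousAt_const.div continuousAt_id (hpos r hr.1).ne').sqrt).tendsto.comp hshift

end ShiftedProfile

theorem inverses_converge_locally_uniformly_general
    (m : ℝ → ℝ)
    (hm_c2 : ContDiffOn ℝ 2 m (Ioi 0))
    (hm_pos : ∀ z : ℝ, 0 < z → 0 < m z)
    (hm_conc : ∀ z : ℝ, 0 < z → deriv (deriv m) z ≤ 0)
    (δbar : ℝ)
    (hδbarsup : ∃ z : ℝ, 0 < z ∧ δbar < m z)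
    (δ : ℕ → ℝ) (hδmem : ∀ k, δ k ∈ Ioo (0 : ℝ) δbar)
    (hδ0 : Tendsto δ atTop (𝓝 0))
    (zδ : ℕ → ℝ) (hzδ : ∀ k, 0 < zδ k ∧ m (zδ k) = δ k)
    (g : ℝ → ℝ)
    (hg_left : ∀ z : ℝ, 0 ≤ z →
      g (∫ r in Ioo (0 : ℝ) z, Real.sqrt (2 / m r)) = z)
    (hg_right : ∀ w : ℝ, 0 ≤ w → 0 ≤ g w ∧
      (∫ r in Ioo (0 : ℝ) (g w), Real.sqrt (2 / m r)) = w)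
    (gδ : ℕ → ℝ → ℝ)
    (hgδ_left : ∀ k, ∀ z : ℝ, 0 ≤ z →
      gδ k (∫ r in Ioo (0 : ℝ) z, Real.sqrt (2 / (m (r + zδ k) - δ k))) = z)
    (hgδ_right : ∀ k, ∀ w : ℝ, 0 ≤ w → 0 ≤ gδ k w ∧
      (∫ r in Ioo (0 : ℝ) (gδ k w), Real.sqrt (2 / (m (r + zδ k) - δ k))) = w) :
    ∃ φ : ℕ → ℕ, StrictMono φ ∧
      TendstoLocallyUniformlyOn (fun k => gδ (φ k)) g atTop (Ici 0) := by
  obtain ⟨zs, hzs, hδzs⟩ := hδbarsup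
  have hconc : ConcaveOn ℝ (Ioi 0) m :=
    concaveOn_of_deriv2_nonpos' (convex_Ioi 0) (hm_c2.differentiableOn (by norm_num))
      ((hm_c2.deriv_of_isOpen isOpen_Ioi (by norm_num)).differentiableOn one_ne_zero) hm_conc
  have hmono : MonotoneOn m (Ioi 0) :=
    hconc.monotoneOn_of_forall_le (C := 0) fun z hz => (hm_pos z hz).le
  have hδle : ∀ k, δ k ≤ δbar := fun k => (hδmem k).2.le
  have hF : StrictMonoOn (primitive fun r => √(2 / m r)) (Ici 0) :=
    strictMonoOn_primitive (fun r hr => Real.sqrt_pos.2 (div_pos two_pos (hm_pos r hr)))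
      fun z => integrableOn_Ioo_of_leftInverse hg_left
  have hFδ : ∀ k, StrictMonoOn (primitive fun r => √(2 / (m (r + zδ k) - δ k))) (Ici 0) :=
    fun k => strictMonoOn_primitive (fun r hr => Real.sqrt_pos.2 (div_pos two_pos
      (shift_sub_pos_s16 hconc hmono hzs hδzs (hzδ k).1 (hzδ k).2 (hδle k) hr)))
      fun z => integrableOn_Ioo_of_leftInverse (hgδ_left k)
  have hg_cont : ContinuousOn g (Ici 0) :=
    continuousOn_Ici_of_monotoneOn_of_surjOn
      (hF.monotoneOn_of_rightInvOn (fun w hw => (hg_right w hw).1) fun w hw => (hg_right w hw).2)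
      (fun w hw => (hg_right w hw).1)
      fun z hz => ⟨_, setIntegral_nonneg measurableSet_Ioo fun r _ => Real.sqrt_nonneg _,
        hg_left z hz⟩
  refine ⟨id, strictMono_id, tendstoLocallyUniformlyOn_Ici_of_monotoneOn (fun k =>
    (hFδ k).monotoneOn_of_rightInvOn (fun w hw => (hgδ_right k w hw).1)
      fun w hw => (hgδ_right k w hw).2) hg_cont fun w hw => ?_⟩
  exact tendsto_of_apply_eq_of_monotoneOn hF (fun k => (hFδ k).monotoneOn)
    (fun z hz => tendsto_primitive_shift hconc hmono hm_c2.continuousOn hm_pos hzs hδzs hδle hδ0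
      hzδ hz)
    (hg_right w hw).1 (fun k => (hgδ_right k w hw).1)
    fun k => (hgδ_right k w hw).2.trans (hg_right w hw).2.symm

/-- Let `S = ∞`, `m` satisfy (M), `(δ_k)` a vanishing sequence in
`(0,δ̄)` with `δ̄ < sup m`, `z_{δ_k}` the unique solution of `m(z) = δ_k`,
`m_{δ_k}(z) := m(z + z_{δ_k}) − δ_k`, `f_{δ_k}(z) := ∫₀^z √(2/m_{δ_k}(r)) dr`,
`g := f⁻¹` and `g_{δ_k} := f_{δ_k}⁻¹`. Then a subsequence of `(g_{δ_k})` converges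
locally uniformly on `[0,∞)` to `g`. -/
theorem inverses_converge_locally_uniformly
    (m : ℝ → ℝ)
    (hm_c2 : ContDiffOn ℝ 2 m (Ioi 0))
    (hm_pos : ∀ z : ℝ, 0 < z → 0 < m z)
    (hm_conc : ∀ z : ℝ, 0 < z → deriv (deriv m) z ≤ 0)
    (hm0 : Tendsto m (𝓝[>] (0 : ℝ)) (𝓝 0))
    (δbar : ℝ) (hδbar : 0 < δbar)
    (hδbarsup : ∃ z : ℝ, 0 < z ∧ δbar < m z)
    (δ : ℕ → ℝ) (hδmem : ∀ k, δ k ∈ Ioo (0 : ℝ) δbar)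
    (hδ0 : Tendsto δ atTop (𝓝 0))
    (zδ : ℕ → ℝ) (hzδ : ∀ k, 0 < zδ k ∧ m (zδ k) = δ k)
    (g : ℝ → ℝ)
    (hg_left : ∀ z : ℝ, 0 ≤ z →
      g (∫ r in Ioo (0 : ℝ) z, Real.sqrt (2 / m r)) = z)
    (hg_right : ∀ w : ℝ, 0 ≤ w → 0 ≤ g w ∧
      (∫ r in Ioo (0 : ℝ) (g w), Real.sqrt (2 / m r)) = w)
    (gδ : ℕ → ℝ → ℝ)
    (hgδ_left : ∀ k, ∀ z : ℝ, 0 ≤ z →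
      gδ k (∫ r in Ioo (0 : ℝ) z, Real.sqrt (2 / (m (r + zδ k) - δ k))) = z)
    (hgδ_right : ∀ k, ∀ w : ℝ, 0 ≤ w → 0 ≤ gδ k w ∧
      (∫ r in Ioo (0 : ℝ) (gδ k w), Real.sqrt (2 / (m (r + zδ k) - δ k))) = w) :
    ∃ φ : ℕ → ℕ, StrictMono φ ∧
      TendstoLocallyUniformlyOn (fun k => gδ (φ k)) g atTop (Ici 0) :=
  inverses_converge_locally_uniformly_general m hm_c2 hm_pos hm_conc δbar hδbarsup δ hδmem hδ0 zδ
    hzδ g hg_left hg_right gδ hgδ_left hgδ_right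
end
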